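/- arXiv:2505.16018 — 4 statements merged into one kernel-verified Lean document; each statement's English description precedes it below -/
import Mathlib

section
/- Fix γ > 0 and set α = 2/γ, C₀ = (e^{−2πα} − 1)/∫₀^{2π} e^{−α(r + 2 sin r)} dr, and w(θ) = C₀ e^{α(θ + 2 sin θ)} ∫₀^{θ} e^{−α(r + 2 sin r)} dr + e^{α(θ + 2 sin θ)}. Then w is smooth, satisfies w′(θ) − α(1 + 2 cos θ) w(θ) = C₀ for every θ ∈ ℝ, satisfies the periodicity conditions w(0) = w(2π) and w′(0) = w′(2π), and solves the stationary Fokker–Planck equation (γ/2) w″(θ) = d/dθ[(1 + 2 cos θ) w(θ)] for every θ ∈ ℝ. -/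
set_option maxHeartbeats 1000000


open Real

/-- Normalizing integral `∫₀^{2π} e^{−α(r + 2 sin r)} dr` with `α = 2/γ`. -/
noncomputable def Znorm (γ : ℝ) : ℝ :=
  ∫ r in (0:ℝ)..(2 * π), Real.exp (-(2 / γ) * (r + 2 * Real.sin r))

/-- The constant `C₀ = (e^{−2πα} − 1)/∫₀^{2π} e^{−α(r+2 sin r)} dr`, `α = 2/γ`. -/
noncomputable def C0 (γ : ℝ) : ℝ :=
  (Real.exp (-(2 * π) * (2 / γ)) - 1) / Znorm γ

/-- The unnormalized stationary density
`w(θ) = C₀ e^{α(θ+2 sin θ)} ∫₀^θ e^{−α(r+2 sin r)} dr + e^{α(θ+2 sin θ)}`, `α = 2/γ`. -/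
noncomputable def wfun (γ : ℝ) (θ : ℝ) : ℝ :=
  C0 γ * Real.exp ((2 / γ) * (θ + 2 * Real.sin θ)) *
      (∫ r in (0:ℝ)..θ, Real.exp (-(2 / γ) * (r + 2 * Real.sin r)))
    + Real.exp ((2 / γ) * (θ + 2 * Real.sin θ))


noncomputable def fC (α : ℝ) : ℂ → ℂ := fun z => Complex.exp (-(α:ℂ) * (z + 2 * Complex.sin z))

noncomputable def FC (α : ℝ) : ℂ → ℂ := fun z => ∫ t in (0:ℝ)..1, fC α ((t:ℂ) * z) * z

noncomputable def GC (α : ℝ) : ℂ → ℝ → ℂ := fun x t =>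
  fC α ((t:ℂ) * x) * (-(α:ℂ) * (1 + 2 * Complex.cos ((t:ℂ) * x))) * (t:ℂ) * x
    + fC α ((t:ℂ) * x)

lemma fC_cont (α : ℝ) : Continuous (fC α) := by unfold fC; fun_prop

lemma fC_hasDeriv (α : ℝ) (z : ℂ) :
    HasDerivAt (fC α) (fC α z * (-(α:ℂ) * (1 + 2 * Complex.cos z))) z := by
  have h1 : HasDerivAt (fun w : ℂ => -(α:ℂ) * (w + 2 * Complex.sin w))
      (-(α:ℂ) * (1 + 2 * Complex.cos z)) z := by
    have := ((hasDerivAt_id z).add ((Complex.hasDerivAt_sin z).const_mul 2)).const_mul (-(α:ℂ))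
    simpa using this
  show HasDerivAt (fun z : ℂ => Complex.exp (-(α:ℂ) * (z + 2 * Complex.sin z)))
      (Complex.exp (-(α:ℂ) * (z + 2 * Complex.sin z)) * (-(α:ℂ) * (1 + 2 * Complex.cos z))) z
  exact h1.cexp

lemma GC_cont (α : ℝ) : Continuous fun p : ℝ × ℂ => GC α p.2 p.1 := by
  unfold GC fC; fun_prop

lemma FC_differentiable (α : ℝ) : Differentiable ℂ (FC α) := by
  intro z₀
  obtain ⟨C, hC⟩ := (isCompact_Icc.prod (isCompact_closedBall z₀ 1)).exists_bound_of_continuousOn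
    (s := Set.Icc (0:ℝ) 1 ×ˢ Metric.closedBall z₀ 1) (GC_cont α).continuousOn
  have hcont1 : ∀ x : ℂ, Continuous fun t : ℝ => fC α ((t:ℂ) * x) * x := by
    intro x
    exact ((fC_cont α).comp (by fun_prop)).mul continuous_const
  have key := intervalIntegral.hasDerivAt_integral_of_dominated_loc_of_deriv_le
    (𝕜 := ℂ) (μ := MeasureTheory.volume) (a := (0:ℝ)) (b := 1)
    (F := fun x t => fC α ((t:ℂ) * x) * x) (F' := GC α) (x₀ := z₀)
    (bound := fun _ => C) (Metric.ball_mem_nhds z₀ one_pos)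
    (Filter.Eventually.of_forall fun x => (hcont1 x).aestronglyMeasurable.restrict)
    ((hcont1 z₀).intervalIntegrable 0 1)
    (((GC_cont α).comp (Continuous.prodMk_left z₀)).aestronglyMeasurable.restrict)
    (Filter.Eventually.of_forall fun t ht x hx => by
      have ht' : t ∈ Set.Icc (0:ℝ) 1 := by
        rw [Set.uIoc_of_le (by norm_num : (0:ℝ) ≤ 1)] at ht
        exact ⟨ht.1.le, ht.2⟩
      exact hC (t, x) ⟨ht', Metric.ball_subset_closedBall hx⟩)
    intervalIntegrable_const
    (Filter.Eventually.of_forall fun t _ x _ => by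
      have h1 : HasDerivAt (fun y : ℂ => (t:ℂ) * y) (t:ℂ) x := by
        simpa using (hasDerivAt_id x).const_mul (t:ℂ)
      have h2 : HasDerivAt (fun y : ℂ => fC α ((t:ℂ) * y))
          (fC α ((t:ℂ) * x) * (-(α:ℂ) * (1 + 2 * Complex.cos ((t:ℂ) * x))) * (t:ℂ)) x :=
        (fC_hasDeriv α ((t:ℂ) * x)).comp x h1
      have h3 := h2.mul (hasDerivAt_id x)
      simp only [id] at h3
      unfold GC
      exact h3.congr_deriv (by ring))
  exact key.2.differentiableAt

lemma FC_real (α : ℝ) (x : ℝ) :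
    FC α (x:ℂ) =
      ((∫ r in (0:ℝ)..x, Real.exp (-α * (r + 2 * Real.sin r)) : ℝ) : ℂ) := by
  rcases eq_or_ne x 0 with h | h
  · simp [FC, h]
  · have e1 : ∀ t : ℝ, fC α ((t:ℂ) * (x:ℂ)) * (x:ℂ)
        = ((Real.exp (-α * (t * x + 2 * Real.sin (t * x))) * x : ℝ) : ℂ) := by
      intro t
      unfold fC
      push_cast
      ring_nf
    have e2 : FC α (x:ℂ)
        = ∫ t in (0:ℝ)..1, ((Real.exp (-α * (t * x + 2 * Real.sin (t * x))) * x : ℝ) : ℂ) := by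
      unfold FC
      exact intervalIntegral.integral_congr fun t _ => e1 t
    rw [e2, intervalIntegral.integral_ofReal]
    norm_cast
    have e3 : (∫ t in (0:ℝ)..1, Real.exp (-α * (t * x + 2 * Real.sin (t * x))) * x)
        = (∫ t in (0:ℝ)..1, Real.exp (-α * (t * x + 2 * Real.sin (t * x)))) * x :=
      intervalIntegral.integral_mul_const x _
    rw [e3,
      intervalIntegral.integral_comp_mul_right
        (fun r => Real.exp (-α * (r + 2 * Real.sin r))) h]
    simp [smul_eq_mul]
    field_simp

lemma F_analytic (α : ℝ) :
    AnalyticOnNhd ℝ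
      (fun x : ℝ => ∫ r in (0:ℝ)..x, Real.exp (-α * (r + 2 * Real.sin r)))
      Set.univ := by
  have h2 : AnalyticOnNhd ℝ (FC α) Set.univ :=
    (((FC_differentiable α).differentiableOn).analyticOnNhd isOpen_univ).restrictScalars
  have h3 : AnalyticOnNhd ℝ (fun x : ℝ => FC α (x:ℂ)) Set.univ :=
    h2.comp (Complex.ofRealCLM.analyticOnNhd Set.univ) (Set.mapsTo_univ _ _)
  have h4 : AnalyticOnNhd ℝ (fun x : ℝ => (FC α (x:ℂ)).re) Set.univ :=
    (Complex.reCLM.analyticOnNhd Set.univ).comp h3 (Set.mapsTo_univ _ _)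
  have hFeq : (fun x : ℝ => ∫ r in (0:ℝ)..x, Real.exp (-α * (r + 2 * Real.sin r)))
      = fun x : ℝ => (FC α (x:ℂ)).re := by
    funext x; rw [FC_real α x, Complex.ofReal_re]
  rw [hFeq]
  exact h4


/-- Lemma 4.4: `w` is smooth, solves `w′ − α(1+2cos θ)w = C₀`, is
2π-periodic together with its derivative at the endpoints, and solves the stationary
Fokker–Planck equation `(γ/2) w″ = d/dθ[(1+2cos θ) w]`. -/
theorem stationary_density_high_energy (γ : ℝ) (hγ : 0 < γ) :
    ContDiff ℝ (⊤ : ℕ∞) (wfun γ) ∧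
    (∀ θ : ℝ,
      deriv (wfun γ) θ - (2 / γ) * (1 + 2 * Real.cos θ) * wfun γ θ = C0 γ) ∧
    wfun γ 0 = wfun γ (2 * π) ∧
    deriv (wfun γ) 0 = deriv (wfun γ) (2 * π) ∧
    (∀ θ : ℝ,
      γ / 2 * deriv (deriv (wfun γ)) θ =
        deriv (fun s => (1 + 2 * Real.cos s) * wfun γ s) θ) := by
  set α := 2 / γ with hα
  set f : ℝ → ℝ := fun r => Real.exp (-α * (r + 2 * Real.sin r)) with hf
  set g : ℝ → ℝ := fun t => Real.exp (α * (t + 2 * Real.sin t)) with hg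
  set F : ℝ → ℝ := fun t => ∫ r in (0:ℝ)..t, f r with hFdef
  have hfc : Continuous f := by fun_prop
  have hgc : Continuous g := by fun_prop
  have hu : ∀ θ : ℝ, HasDerivAt (fun t : ℝ => t + 2 * Real.sin t) (1 + 2 * Real.cos θ) θ := by
    intro θ
    exact (hasDerivAt_id θ).add ((Real.hasDerivAt_sin θ).const_mul 2)
  have hgd : ∀ θ : ℝ, HasDerivAt g (g θ * (α * (1 + 2 * Real.cos θ))) θ := by
    intro θ
    exact (((hu θ).const_mul α).exp)
  have hFd : ∀ θ : ℝ, HasDerivAt F (f θ) θ := by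
    intro θ
    exact intervalIntegral.integral_hasDerivAt_right
      (hfc.intervalIntegrable 0 θ)
      hfc.aestronglyMeasurable.stronglyMeasurableAtFilter hfc.continuousAt
  have hgf : ∀ θ : ℝ, g θ * f θ = 1 := by
    intro θ
    rw [hg, hf]
    rw [← Real.exp_add]
    ring_nf
    exact Real.exp_zero
  have hw : wfun γ = fun θ => C0 γ * g θ * F θ + g θ := by
    funext θ; simp [wfun, hg, hFdef, hf, hα]
  have hwd : ∀ θ : ℝ, HasDerivAt (wfun γ)
      (α * (1 + 2 * Real.cos θ) * wfun γ θ + C0 γ) θ := by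
    intro θ
    rw [hw]
    have h1 : HasDerivAt (fun t => C0 γ * g t * F t + g t)
        ((C0 γ * (g θ * (α * (1 + 2 * Real.cos θ)))) * F θ + (C0 γ * g θ) * f θ
          + g θ * (α * (1 + 2 * Real.cos θ))) θ := by
      exact (((hgd θ).const_mul (C0 γ)).mul (hFd θ)).add (hgd θ)
    convert h1 using 1
    have h2 : C0 γ * g θ * f θ = C0 γ := by rw [mul_assoc, hgf θ, mul_one]
    rw [h2]
    beta_reduce
    ring
  have hODE : ∀ θ : ℝ,
      deriv (wfun γ) θ - α * (1 + 2 * Real.cos θ) * wfun γ θ = C0 γ := by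
    intro θ
    rw [(hwd θ).deriv]
    ring
  -- analyticity of F via complex extension (see lemmas above)
  have hFan : AnalyticOnNhd ℝ F Set.univ := by
    rw [hFdef, hf]
    exact F_analytic α
  have hFsm : ContDiff ℝ (⊤ : ℕ∞) F := hFan.contDiff
  have hgsm : ContDiff ℝ (⊤ : ℕ∞) g := by
    apply Real.contDiff_exp.comp
    exact contDiff_const.mul (contDiff_id.add (contDiff_const.mul Real.contDiff_sin))
  have hwsm : ContDiff ℝ (⊤ : ℕ∞) (wfun γ) := by
    rw [hw]
    exact ((contDiff_const.mul hgsm).mul hFsm).add hgsm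
  -- periodicity
  have hZ : (0:ℝ) < Znorm γ := by
    apply intervalIntegral.intervalIntegral_pos_of_pos
    · exact (by fun_prop :
        Continuous fun r => Real.exp (-(2/γ) * (r + 2 * Real.sin r))).intervalIntegrable 0 (2*π)
    · intro x; exact Real.exp_pos _
    · positivity
  have hw0 : wfun γ 0 = 1 := by
    simp [wfun, intervalIntegral.integral_same]
  have hw2 : wfun γ (2*π) = 1 := by
    have hC : C0 γ * Znorm γ = Real.exp (-(2*π) * (2/γ)) - 1 := by
      rw [C0, div_mul_cancel₀ _ hZ.ne']
    have e1 : wfun γ (2*π) =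
        C0 γ * Znorm γ * Real.exp ((2/γ) * (2*π)) + Real.exp ((2/γ) * (2*π)) := by
      rw [wfun, Znorm, Real.sin_two_pi]
      simp only [mul_zero, add_zero]
      ring
    rw [e1, hC, sub_mul, ← Real.exp_add,
      show -(2*π)*(2/γ) + (2/γ)*(2*π) = 0 by ring, Real.exp_zero]
    ring
  have hper : wfun γ 0 = wfun γ (2*π) := by rw [hw0, hw2]
  have hdper : deriv (wfun γ) 0 = deriv (wfun γ) (2*π) := by
    rw [(hwd 0).deriv, (hwd (2*π)).deriv, hw0, hw2, Real.cos_two_pi, Real.cos_zero]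
  refine ⟨hwsm, hODE, hper, hdper, ?_⟩
  -- Fokker-Planck
  intro θ
  have hh : HasDerivAt (fun s => (1 + 2 * Real.cos s) * wfun γ s)
      ((2 * (-Real.sin θ)) * wfun γ θ
        + (1 + 2 * Real.cos θ) * (α * (1 + 2 * Real.cos θ) * wfun γ θ + C0 γ)) θ := by
    have := (((hasDerivAt_const θ (1:ℝ)).add ((Real.hasDerivAt_cos θ).const_mul 2)).mul (hwd θ))
    exact this.congr_deriv (by simp only [Pi.add_apply]; ring)
  have hderivw : deriv (wfun γ) = fun θ => α * (1 + 2 * Real.cos θ) * wfun γ θ + C0 γ :=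
    funext fun θ => (hwd θ).deriv
  have hd2 : deriv (deriv (wfun γ)) θ
      = α * ((2 * (-Real.sin θ)) * wfun γ θ
        + (1 + 2 * Real.cos θ) * (α * (1 + 2 * Real.cos θ) * wfun γ θ + C0 γ)) := by
    rw [hderivw]
    have h3 : HasDerivAt (fun θ => α * (1 + 2 * Real.cos θ) * wfun γ θ + C0 γ)
        (α * ((2 * (-Real.sin θ)) * wfun γ θ
          + (1 + 2 * Real.cos θ) * (α * (1 + 2 * Real.cos θ) * wfun γ θ + C0 γ))) θ := by
      have h4 := (hh.const_mul α).add_const (C0 γ)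
      have e : (fun θ => α * (1 + 2 * Real.cos θ) * wfun γ θ + C0 γ)
          = (fun x => α * ((1 + 2 * Real.cos x) * wfun γ x) + C0 γ) := by
        funext s; ring
      rw [e]; exact h4
    exact h3.deriv
  rw [hd2, hh.deriv, hα]
  have hone : γ / 2 * (2 / γ) = 1 := by field_simp
  rw [← mul_assoc, hone, one_mul]
end

section
/- For every c > 0 and every ε > 0 there exists γ₀ > 0 such that for all 0 < γ < γ₀, the normalized density u* satisfies ∫_{{θ ∈ [0,2π] : |θ − 2π/3| > c}} u*(θ) dθ < ε; that is, the stationary phase distribution concentrates near the stable equilibrium 2π/3 as γ → 0. -/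
open Real

/-- The normalized stationary density `u*(θ) = w(θ)/∫₀^{2π} w`. -/
noncomputable def ustar (γ : ℝ) (θ : ℝ) : ℝ :=
  wfun γ θ / ∫ s in (0:ℝ)..(2 * π), wfun γ s

open MeasureTheory


noncomputable def Vf (θ : ℝ) : ℝ := θ + 2 * Real.sin θ

lemma Vf_hasDeriv (x : ℝ) : HasDerivAt Vf (1 + 2 * Real.cos x) x := by
  exact (hasDerivAt_id' x).add ((Real.hasDerivAt_sin x).const_mul 2)

lemma Vf_cont : Continuous Vf := by
  unfold Vf; continuity

lemma cos_2pi3 : Real.cos (2*π/3) = -(1/2) := by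
  have : (2*π/3 : ℝ) = π - π/3 := by ring
  rw [this, Real.cos_pi_sub, Real.cos_pi_div_three]

lemma Vf_mono1 : StrictMonoOn Vf (Set.Icc 0 (2*π/3)) := by
  apply strictMonoOn_of_deriv_pos (convex_Icc _ _) Vf_cont.continuousOn
  intro x hx
  rw [interior_Icc] at hx
  rw [(Vf_hasDeriv x).deriv]
  have h : Real.cos (2*π/3) < Real.cos x :=
    Real.cos_lt_cos_of_nonneg_of_le_pi hx.1.le (by nlinarith [Real.pi_pos]) hx.2
  rw [cos_2pi3] at h; linarith

lemma Vf_anti : StrictAntiOn Vf (Set.Icc (2*π/3) (4*π/3)) := by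
  apply strictAntiOn_of_deriv_neg (convex_Icc _ _) Vf_cont.continuousOn
  intro x hx
  rw [interior_Icc] at hx
  rw [(Vf_hasDeriv x).deriv]
  have hc : Real.cos x < -(1/2) := by
    rcases le_or_gt x π with h | h
    · have := Real.cos_lt_cos_of_nonneg_of_le_pi (by positivity : (0:ℝ) ≤ 2*π/3) h hx.1
      rw [cos_2pi3] at this; linarith
    · have h2 : Real.cos (2*π-x) < -(1/2) := by
        have := Real.cos_lt_cos_of_nonneg_of_le_pi (by positivity : (0:ℝ) ≤ 2*π/3)
          (by linarith : (2*π - x) ≤ π) (by linarith [hx.2] : 2*π/3 < 2*π - x)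
        rw [cos_2pi3] at this; linarith
      rwa [Real.cos_two_pi_sub] at h2
  linarith

lemma Vf_mono2 : StrictMonoOn Vf (Set.Icc (4*π/3) (2*π)) := by
  apply strictMonoOn_of_deriv_pos (convex_Icc _ _) Vf_cont.continuousOn
  intro x hx
  rw [interior_Icc] at hx
  rw [(Vf_hasDeriv x).deriv]
  have h2 : Real.cos (2*π/3) < Real.cos (2*π - x) :=
    Real.cos_lt_cos_of_nonneg_of_le_pi (by linarith [hx.2] : (0:ℝ) ≤ 2*π - x)
      (by nlinarith [Real.pi_pos]) (by linarith [hx.1])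
  rw [Real.cos_two_pi_sub, cos_2pi3] at h2; linarith

lemma Vf_nonneg {θ : ℝ} (h0 : 0 ≤ θ) (h2 : θ ≤ 2*π) : 0 ≤ Vf θ := by
  unfold Vf
  rcases le_or_gt θ π with h | h
  · have := Real.sin_nonneg_of_nonneg_of_le_pi h0 h; linarith
  · have := Real.neg_one_le_sin θ
    have := Real.pi_gt_three
    linarith

lemma Vf_le_2pi {θ : ℝ} (h0 : 0 ≤ θ) (h2 : θ ≤ 2*π) : Vf θ ≤ 2*π := by
  unfold Vf
  rcases le_or_gt θ π with h | h
  · have := Real.sin_le_one θ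
    have := Real.pi_gt_three
    linarith
  · have hs : Real.sin θ ≤ 0 := by
      have h1 : 0 ≤ Real.sin (2*π - θ) :=
        Real.sin_nonneg_of_nonneg_of_le_pi (by linarith) (by linarith)
      rw [Real.sin_two_pi_sub] at h1; linarith
    linarith

lemma Vf_lip (x y : ℝ) : |Vf x - Vf y| ≤ 3 * |x - y| := by
  have hs : |Real.sin x - Real.sin y| ≤ |x - y| := by
    rw [Real.sin_sub_sin]
    have h1 : |Real.sin ((x-y)/2)| ≤ |(x-y)/2| := Real.abs_sin_le_abs
    have h2 : |Real.cos ((x+y)/2)| ≤ 1 := Real.abs_cos_le_one _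
    rw [abs_mul, abs_mul]
    have : |(x-y)/2| = |x-y|/2 := by rw [abs_div]; norm_num
    rw [this] at h1
    have h22 : |(2:ℝ)| = 2 := by norm_num
    rw [h22]
    nlinarith [abs_nonneg (Real.sin ((x-y)/2)), abs_nonneg (x-y), abs_nonneg (Real.cos ((x+y)/2))]
  unfold Vf
  have : Vf x - Vf y = (x - y) + 2*(Real.sin x - Real.sin y) := by unfold Vf; ring
  calc |x + 2*Real.sin x - (y + 2*Real.sin y)| = |(x-y) + 2*(Real.sin x - Real.sin y)| := by ring_nf
    _ ≤ |x-y| + |2*(Real.sin x - Real.sin y)| := abs_add_le _ _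
    _ ≤ |x-y| + 2*|x-y| := by rw [abs_mul]; simp; linarith
    _ = 3*|x-y| := by ring

lemma Vf_min_right {r : ℝ} (h1 : 2*π/3 ≤ r) (h2 : r ≤ 2*π) : Vf (4*π/3) ≤ Vf r := by
  have hpi := Real.pi_pos
  rcases le_or_gt r (4*π/3) with h | h
  · exact Vf_anti.antitoneOn ⟨h1, h⟩ ⟨by linarith, le_refl _⟩ h
  · exact Vf_mono2.monotoneOn ⟨le_refl _, by linarith⟩ ⟨h.le, h2⟩ h.le

lemma sqrt3_gt : (1.7:ℝ) < Real.sqrt 3 := by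
  nlinarith [Real.sq_sqrt (by norm_num : (3:ℝ) ≥ 0), Real.sqrt_nonneg 3]

lemma Vf_V0 : Vf (2*π/3) = 2*π/3 + Real.sqrt 3 := by
  unfold Vf
  have : (2*π/3:ℝ) = π - π/3 := by ring
  rw [this, Real.sin_pi_sub, Real.sin_pi_div_three]; ring

lemma Vf_V1 : Vf (4*π/3) = 4*π/3 - Real.sqrt 3 := by
  unfold Vf
  have : (4*π/3:ℝ) = 2*π - (π - π/3) := by ring
  rw [this, Real.sin_two_pi_sub, Real.sin_pi_sub, Real.sin_pi_div_three]; ring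

lemma H_pos : 0 < Vf (2*π/3) - Vf (4*π/3) := by
  rw [Vf_V0, Vf_V1]
  have := sqrt3_gt
  have := Real.pi_lt_d2
  linarith

lemma key (c : ℝ) (hc : 0 < c) :
    ∃ d > 0, d ≤ Vf (2*π/3) - Vf (4*π/3) ∧
      ∀ θ ∈ Set.Icc (0:ℝ) (2*π), c ≤ |θ - 2*π/3| →
        ∀ r, θ ≤ r → r ≤ 2*π → Vf θ - Vf r ≤ (Vf (2*π/3) - Vf (4*π/3)) - d := by
  have hpi := Real.pi_pos
  set c' := min c (2*π/3) with hc'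
  have hc'0 : 0 < c' := lt_min hc (by linarith)
  have hc'le : c' ≤ 2*π/3 := min_le_right _ _
  set V0 := Vf (2*π/3)
  set V1 := Vf (4*π/3)
  set d1 := V0 - Vf (2*π/3 + c') with hd1
  set d2 := V0 - Vf (2*π/3 - c') with hd2
  have hd1p : 0 < d1 := by
    have := Vf_anti (Set.mem_Icc.2 ⟨le_refl _, by linarith⟩)
      (Set.mem_Icc.2 ⟨by linarith, by linarith⟩) (by linarith : 2*π/3 < 2*π/3 + c')
    simpa [hd1, sub_pos] using this
  have hd2p : 0 < d2 := by
    have := Vf_mono1 (Set.mem_Icc.2 ⟨by linarith, by linarith⟩)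
      (Set.mem_Icc.2 ⟨by linarith, le_refl _⟩) (by linarith : 2*π/3 - c' < 2*π/3)
    simpa [hd2, sub_pos] using this
  refine ⟨min (min d1 d2) (V0 - V1), lt_min (lt_min hd1p hd2p) H_pos, min_le_right _ _, ?_⟩
  intro θ hθ habs r hθr hr2
  set d := min (min d1 d2) (V0 - V1) with hd
  have hdle1 : d ≤ d1 := le_trans (min_le_left _ _) (min_le_left _ _)
  have hdle2 : d ≤ d2 := le_trans (min_le_left _ _) (min_le_right _ _)
  have hdleH : d ≤ V0 - V1 := min_le_right _ _
  obtain ⟨hθ0, hθ2⟩ := hθ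
  rcases le_or_gt (4*π/3) θ with h43 | h43
  · -- increasing region
    have : Vf θ ≤ Vf r := Vf_mono2.monotoneOn ⟨h43, hθ2⟩ ⟨le_trans h43 hθr, hr2⟩ hθr
    linarith
  rcases le_or_gt (2*π/3) θ with h23 | h23
  · -- θ ∈ [2π/3 + c', 4π/3)
    have hθc : 2*π/3 + c' ≤ θ := by
      rcases abs_cases (θ - 2*π/3) with ⟨he, _⟩ | ⟨he, _⟩
      · have : c ≤ θ - 2*π/3 := by rw [← he]; exact habs
        have : c' ≤ θ - 2*π/3 := le_trans (min_le_left _ _) this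
        linarith
      · have : c ≤ -(θ - 2*π/3) := by rw [← he]; exact habs
        linarith [min_le_left c (2*π/3)]
    have hVθ : Vf θ ≤ Vf (2*π/3 + c') :=
      Vf_anti.antitoneOn ⟨by linarith, by linarith⟩ ⟨h23, h43.le⟩ hθc
    have hVr : V1 ≤ Vf r := Vf_min_right (by linarith) hr2
    have : Vf θ - Vf r ≤ (V0 - d1) - V1 := by rw [hd1]; linarith
    linarith
  · -- θ < 2π/3, so θ ≤ 2π/3 - c'
    have hθc : θ ≤ 2*π/3 - c' := by
      rcases abs_cases (θ - 2*π/3) with ⟨he, _⟩ | ⟨he, _⟩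
      · have : c ≤ θ - 2*π/3 := by rw [← he]; exact habs
        linarith [min_le_left c (2*π/3)]
      · have h1 : c ≤ -(θ - 2*π/3) := by rw [← he]; exact habs
        have := min_le_left c (2*π/3)
        linarith
    rcases le_or_gt r (2*π/3) with hr | hr
    · have : Vf θ ≤ Vf r := Vf_mono1.monotoneOn ⟨hθ0, by linarith⟩ ⟨by linarith, hr⟩ hθr
      linarith
    · have hVθ : Vf θ ≤ Vf (2*π/3 - c') :=
        Vf_mono1.monotoneOn ⟨hθ0, by linarith⟩ ⟨by linarith, by linarith⟩ hθc
      have hVr : V1 ≤ Vf r := Vf_min_right hr.le hr2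
      have : Vf θ - Vf r ≤ (V0 - d2) - V1 := by rw [hd2]; linarith
      linarith

noncomputable def gg (γ r : ℝ) : ℝ := Real.exp (-(2/γ) * Vf r)
noncomputable def Ifun (γ θ : ℝ) : ℝ := ∫ r in (0:ℝ)..θ, gg γ r
noncomputable def Jfun (γ θ : ℝ) : ℝ := ∫ r in θ..(2*π), gg γ r

lemma gg_cont (γ : ℝ) : Continuous (gg γ) := by unfold gg Vf; continuity

lemma gg_intInt (γ a b : ℝ) : IntervalIntegrable (gg γ) volume a b :=
  (gg_cont γ).intervalIntegrable a b

lemma Znorm_eq (γ : ℝ) : Znorm γ = ∫ r in (0:ℝ)..(2*π), gg γ r := rfl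

lemma Znorm_pos (γ : ℝ) : 0 < Znorm γ := by
  rw [Znorm_eq]
  exact intervalIntegral.intervalIntegral_pos_of_pos_on (gg_intInt γ 0 (2*π))
    (fun x _ => Real.exp_pos _) (by positivity)

lemma I_add_J (γ θ : ℝ) : Ifun γ θ + Jfun γ θ = Znorm γ :=
  intervalIntegral.integral_add_adjacent_intervals (gg_intInt γ 0 θ) (gg_intInt γ θ (2*π))

lemma wfun_eq (γ θ : ℝ) :
    wfun γ θ = Real.exp ((2/γ) * Vf θ) *
      (Jfun γ θ + Real.exp (-(2*π) * (2/γ)) * Ifun γ θ) / Znorm γ := by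
  have hZ : Znorm γ ≠ 0 := (Znorm_pos γ).ne'
  have hIJ := I_add_J γ θ
  unfold wfun C0
  have hI : (∫ r in (0:ℝ)..θ, Real.exp (-(2/γ) * (r + 2*Real.sin r))) = Ifun γ θ := rfl
  rw [hI]
  have hV : Real.exp ((2/γ) * (θ + 2*Real.sin θ)) = Real.exp ((2/γ) * Vf θ) := rfl
  rw [hV]
  set e := Real.exp ((2/γ) * Vf θ) with he
  field_simp
  linear_combination (-e) * hIJ

lemma wfun_cont (γ : ℝ) : Continuous (wfun γ) := by
  unfold wfun
  have hprim : Continuous fun θ : ℝ => ∫ r in (0:ℝ)..θ, Real.exp (-(2/γ) * (r + 2*Real.sin r)) :=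
    intervalIntegral.continuous_primitive
      (fun a b => by
        have : Continuous fun r : ℝ => Real.exp (-(2/γ) * (r + 2*Real.sin r)) := by continuity
        exact this.intervalIntegrable a b) 0
  exact ((continuous_const.mul (by continuity)).mul hprim).add (by continuity)


lemma n_upper (γ : ℝ) (hγ : 0 < γ) {θ M : ℝ} (hθ0 : 0 ≤ θ) (hθ2 : θ ≤ 2*π)
    (hK : ∀ r, θ ≤ r → r ≤ 2*π → Vf θ - Vf r ≤ M) :
    Real.exp ((2/γ)*Vf θ) * (Jfun γ θ + Real.exp (-(2*π)*(2/γ)) * Ifun γ θ)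
      ≤ 2*π*Real.exp ((2/γ)*M) + 2*π := by
  have ha : 0 < 2/γ := by positivity
  have hpi := Real.pi_pos
  have hJ : Real.exp ((2/γ)*Vf θ) * Jfun γ θ ≤ 2*π*Real.exp ((2/γ)*M) := by
    unfold Jfun
    rw [← intervalIntegral.integral_const_mul]
    have h1 : (∫ r in θ..(2*π), Real.exp ((2/γ)*Vf θ) * gg γ r)
        ≤ ∫ r in θ..(2*π), Real.exp ((2/γ)*M) := by
      apply intervalIntegral.integral_mono_on hθ2
      · exact (continuous_const.mul (gg_cont γ)).intervalIntegrable _ _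
      · exact intervalIntegrable_const
      · intro r hr
        unfold gg
        rw [← Real.exp_add]
        apply Real.exp_le_exp.2
        have := hK r hr.1 hr.2
        nlinarith
    rw [intervalIntegral.integral_const, smul_eq_mul] at h1
    nlinarith [Real.exp_pos ((2/γ)*M)]
  have hI : Real.exp ((2/γ)*Vf θ) * (Real.exp (-(2*π)*(2/γ)) * Ifun γ θ) ≤ 2*π := by
    have hIle : Ifun γ θ ≤ 2*π := by
      unfold Ifun
      have h1 : (∫ r in (0:ℝ)..θ, gg γ r) ≤ ∫ r in (0:ℝ)..θ, (1:ℝ) :=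
        intervalIntegral.integral_mono_on hθ0 (gg_intInt γ 0 θ) intervalIntegrable_const
          (fun r hr => by
            unfold gg
            rw [Real.exp_le_one_iff]
            have := Vf_nonneg hr.1 (le_trans hr.2 hθ2)
            nlinarith)
      rw [intervalIntegral.integral_const, smul_eq_mul] at h1
      linarith
    have hIpos : 0 ≤ Ifun γ θ :=
      intervalIntegral.integral_nonneg hθ0 (fun r _ => (Real.exp_pos _).le)
    have hE : Real.exp ((2/γ)*Vf θ) * Real.exp (-(2*π)*(2/γ)) ≤ 1 := by
      rw [← Real.exp_add, Real.exp_le_one_iff]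
      have := Vf_le_2pi hθ0 hθ2
      nlinarith
    calc Real.exp ((2/γ)*Vf θ) * (Real.exp (-(2*π)*(2/γ)) * Ifun γ θ)
        = (Real.exp ((2/γ)*Vf θ) * Real.exp (-(2*π)*(2/γ))) * Ifun γ θ := by ring
      _ ≤ 1 * (2*π) := mul_le_mul hE hIle hIpos zero_le_one
      _ = 2*π := by ring
  nlinarith [hJ, hI]

lemma n_lower (γ : ℝ) (hγ : 0 < γ) {θ δ : ℝ} (hδ0 : 0 < δ) (hδπ : δ ≤ π/3)
    (hθ : |θ - 2*π/3| ≤ δ) :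
    δ * Real.exp ((2/γ) * (Vf (2*π/3) - Vf (4*π/3) - 6*δ))
      ≤ Real.exp ((2/γ)*Vf θ) * (Jfun γ θ + Real.exp (-(2*π)*(2/γ)) * Ifun γ θ) := by
  have hpi := Real.pi_gt_three
  have ha : 0 < 2/γ := by positivity
  obtain ⟨hθl, hθu⟩ := abs_le.1 hθ
  have hθ0 : 0 ≤ θ := by linarith
  have hθ2 : θ ≤ 2*π := by linarith
  have hJ1 : δ * Real.exp (-(2/γ)*(Vf (4*π/3) + 3*δ))
      ≤ ∫ r in (4*π/3:ℝ)..(4*π/3+δ), gg γ r := by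
    have h := intervalIntegral.integral_mono_on (show (4*π/3:ℝ) ≤ 4*π/3+δ by linarith)
      intervalIntegrable_const (gg_intInt γ _ _)
      (fun r hr => by
        show Real.exp (-(2/γ)*(Vf (4*π/3) + 3*δ)) ≤ gg γ r
        unfold gg
        apply Real.exp_le_exp.2
        have hlip := Vf_lip r (4*π/3)
        have h1 : |r - 4*π/3| ≤ δ := by
          rw [abs_le]; exact ⟨by linarith [hr.1], by linarith [hr.2]⟩
        have h2 : Vf r - Vf (4*π/3) ≤ 3*δ := by
          have := le_of_abs_le hlip
          have h3 : 3*|r - 4*π/3| ≤ 3*δ := by linarith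
          linarith
        nlinarith)
    rw [intervalIntegral.integral_const, smul_eq_mul] at h
    calc δ * Real.exp (-(2/γ)*(Vf (4*π/3) + 3*δ))
        = (4*π/3 + δ - 4*π/3) * Real.exp (-(2/γ)*(Vf (4*π/3) + 3*δ)) := by ring
      _ ≤ _ := h
  have hJ2 : (∫ r in (4*π/3:ℝ)..(4*π/3+δ), gg γ r) ≤ Jfun γ θ := by
    unfold Jfun
    have e1 := intervalIntegral.integral_add_adjacent_intervals
      (gg_intInt γ θ (4*π/3)) (gg_intInt γ (4*π/3) (2*π))
    have e2 := intervalIntegral.integral_add_adjacent_intervals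
      (gg_intInt γ (4*π/3) (4*π/3+δ)) (gg_intInt γ (4*π/3+δ) (2*π))
    have n1 : 0 ≤ ∫ r in θ..(4*π/3), gg γ r :=
      intervalIntegral.integral_nonneg (by linarith) (fun _ _ => (Real.exp_pos _).le)
    have n2 : 0 ≤ ∫ r in (4*π/3+δ)..(2*π), gg γ r :=
      intervalIntegral.integral_nonneg (by linarith) (fun _ _ => (Real.exp_pos _).le)
    linarith
  have hVθ : Vf (2*π/3) - 3*δ ≤ Vf θ := by
    have hlip := Vf_lip θ (2*π/3)
    have := neg_abs_le (Vf θ - Vf (2*π/3))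
    have h3 : 3*|θ - 2*π/3| ≤ 3*δ := by linarith
    linarith [abs_le.1 hlip]
  have hJpos : 0 ≤ Jfun γ θ :=
    intervalIntegral.integral_nonneg hθ2 (fun _ _ => (Real.exp_pos _).le)
  have hEI : 0 ≤ Real.exp (-(2*π)*(2/γ)) * Ifun γ θ :=
    mul_nonneg (Real.exp_pos _).le
      (intervalIntegral.integral_nonneg hθ0 (fun _ _ => (Real.exp_pos _).le))
  have hcomb : δ * Real.exp ((2/γ) * (Vf (2*π/3) - Vf (4*π/3) - 6*δ))
      = Real.exp ((2/γ)*(Vf (2*π/3) - 3*δ)) * (δ * Real.exp (-(2/γ)*(Vf (4*π/3) + 3*δ))) := by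
    rw [show Real.exp ((2/γ)*(Vf (2*π/3) - 3*δ)) * (δ * Real.exp (-(2/γ)*(Vf (4*π/3) + 3*δ)))
        = δ * (Real.exp ((2/γ)*(Vf (2*π/3) - 3*δ)) * Real.exp (-(2/γ)*(Vf (4*π/3) + 3*δ))) by ring,
      ← Real.exp_add]
    congr 2
    ring
  rw [hcomb]
  have step1 : Real.exp ((2/γ)*(Vf (2*π/3) - 3*δ)) * (δ * Real.exp (-(2/γ)*(Vf (4*π/3) + 3*δ)))
      ≤ Real.exp ((2/γ)*Vf θ) * Jfun γ θ := by
    apply mul_le_mul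
    · exact Real.exp_le_exp.2 (by nlinarith)
    · exact le_trans hJ1 hJ2
    · positivity
    · positivity
  nlinarith [Real.exp_pos ((2/γ)*Vf θ), step1,
    mul_nonneg (Real.exp_pos ((2/γ)*Vf θ)).le hEI]



/-- Lemma 4.5: the stationary phase distribution concentrates near the
stable equilibrium `2π/3` as `γ → 0`. -/
theorem stationary_density_concentration :
    ∀ c > (0:ℝ), ∀ ε > (0:ℝ), ∃ γ₀ > (0:ℝ), ∀ γ : ℝ, 0 < γ → γ < γ₀ →
      (∫ θ in {θ : ℝ | θ ∈ Set.Icc 0 (2 * π) ∧ c < |θ - 2 * π / 3|}, ustar γ θ) < ε := by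
  intro c hc ε hε
  obtain ⟨d, hd0, hdH, hkey⟩ := key c hc
  have hpi := Real.pi_gt_three
  have hπpos := Real.pi_pos
  set H := Vf (2*π/3) - Vf (4*π/3) with hHdef
  have hH0 : 0 < H := H_pos
  have hHle : H ≤ 4 := by
    rw [hHdef, Vf_V0, Vf_V1]
    have h2 : Real.sqrt 3 ≤ 2 := by
      rw [show (2:ℝ) = Real.sqrt 4 by rw [show (4:ℝ) = 2^2 by norm_num, Real.sqrt_sq]; norm_num]
      exact Real.sqrt_le_sqrt (by norm_num)
    linarith
  set δ := d/12 with hδdef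
  have hδ0 : 0 < δ := by positivity
  have hδπ : δ ≤ π/3 := by rw [hδdef]; nlinarith
  clear_value H δ
  refine ⟨ε*δ^2*d/(4*π^2), by positivity, ?_⟩
  intro γ hγ0 hγ1
  set S := {θ : ℝ | θ ∈ Set.Icc 0 (2*π) ∧ c < |θ - 2*π/3|} with hSdef
  have hSmeas : MeasurableSet S := by
    have : S = Set.Icc 0 (2*π) ∩ {θ | c < |θ - 2*π/3|} := rfl
    rw [this]
    exact measurableSet_Icc.inter
      (measurableSet_lt measurable_const
        ((continuous_abs.comp (continuous_id.sub continuous_const)).measurable))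
  have hZ : 0 < Znorm γ := Znorm_pos γ
  set W := ∫ s in (0:ℝ)..(2*π), wfun γ s with hWdef
  set K := 2*π*Real.exp ((2/γ)*(H-d)) + 2*π with hKdef
  set LBc := δ * Real.exp ((2/γ) * (H - 6*δ)) / Znorm γ with hLBcdef
  clear_value K
  have hLBc0 : 0 < LBc := by rw [hLBcdef]; positivity
  clear_value LBc
  have hK0 : 0 < K := by rw [hKdef]; positivity
  have hwf_nonneg : ∀ θ, 0 ≤ θ → θ ≤ 2*π → 0 ≤ wfun γ θ := by
    intro θ h1 h2
    rw [wfun_eq]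
    apply div_nonneg _ hZ.le
    apply mul_nonneg (Real.exp_pos _).le
    exact add_nonneg
      (intervalIntegral.integral_nonneg h2 (fun _ _ => (Real.exp_pos _).le))
      (mul_nonneg (Real.exp_pos _).le
        (intervalIntegral.integral_nonneg h1 (fun _ _ => (Real.exp_pos _).le)))
  have hB_lower : ∀ θ ∈ Set.Icc (2*π/3-δ) (2*π/3+δ), LBc ≤ wfun γ θ := by
    intro θ hθ
    rw [wfun_eq, hLBcdef]
    apply (div_le_div_iff_of_pos_right hZ).2
    rw [hHdef]
    have h1 := hθ.1
    have h2 := hθ.2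
    exact n_lower γ hγ0 hδ0 hδπ (abs_le.2 ⟨by linarith, by linarith⟩)
  have hWlow : LBc * (2*δ) ≤ W := by
    rw [hWdef, intervalIntegral.integral_of_le (by positivity : (0:ℝ) ≤ 2*π)]
    have hsub : Set.Icc (2*π/3-δ) (2*π/3+δ) ⊆ Set.Ioc 0 (2*π) := by
      intro x hx
      exact ⟨by nlinarith [hx.1], by nlinarith [hx.2]⟩
    have hIntOn : MeasureTheory.IntegrableOn (wfun γ) (Set.Ioc 0 (2*π)) volume :=
      (wfun_cont γ).integrableOn_Ioc
    have h1 : (∫ θ in Set.Icc (2*π/3-δ) (2*π/3+δ), wfun γ θ)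
        ≤ ∫ θ in Set.Ioc 0 (2*π), wfun γ θ := by
      apply setIntegral_mono_set hIntOn
      · exact (ae_restrict_iff' measurableSet_Ioc).2
          (Filter.Eventually.of_forall (fun x hx => hwf_nonneg x hx.1.le hx.2))
      · exact HasSubset.Subset.eventuallyLE hsub
    have h2 : LBc * (2*δ) ≤ ∫ θ in Set.Icc (2*π/3-δ) (2*π/3+δ), wfun γ θ := by
      have hconst : MeasureTheory.IntegrableOn (fun _ : ℝ => LBc)
          (Set.Icc (2*π/3-δ) (2*π/3+δ)) volume := by
        exact MeasureTheory.integrableOn_const (by rw [Real.volume_Icc]; exact ENNReal.ofReal_ne_top)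
      have h := MeasureTheory.setIntegral_mono_on hconst
        ((wfun_cont γ).integrableOn_Icc) measurableSet_Icc hB_lower
      rw [MeasureTheory.setIntegral_const, Real.volume_real_Icc_of_le (by linarith),
        smul_eq_mul] at h
      calc LBc * (2*δ) = (2*π/3+δ - (2*π/3-δ)) * LBc := by ring
        _ ≤ _ := h
    linarith
  have hWpos : 0 < W := lt_of_lt_of_le (by positivity) hWlow
  have hSfin : volume S < ⊤ :=
    lt_of_le_of_lt (measure_mono (fun x (hx : x ∈ S) => hx.1))
      (by rw [Real.volume_Icc]; exact ENNReal.ofReal_lt_top)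
  have hSbound : ∀ x ∈ S, ‖wfun γ x‖ ≤ K / Znorm γ := by
    intro x hx
    rw [Real.norm_eq_abs, abs_of_nonneg (hwf_nonneg x hx.1.1 hx.1.2)]
    rw [wfun_eq]
    apply (div_le_div_iff_of_pos_right hZ).2
    have := n_upper γ hγ0 hx.1.1 hx.1.2
      (fun r h1 h2 => hkey x hx.1 hx.2.le r h1 h2)
    rw [hKdef]
    exact this
  have hSint : (∫ θ in S, wfun γ θ) ≤ (K/Znorm γ) * (2*π) := by
    have hmeas : MeasureTheory.AEStronglyMeasurable (wfun γ) (volume.restrict S) :=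
      (wfun_cont γ).aestronglyMeasurable.restrict
    have h := MeasureTheory.norm_setIntegral_le_of_norm_le_const hSfin hSbound
    have hμ : (volume S).toReal ≤ 2*π := by
      have hmono : volume S ≤ volume (Set.Icc (0:ℝ) (2*π)) :=
        measure_mono (fun x hx => hx.1)
      have h2 := ENNReal.toReal_mono
        (by rw [Real.volume_Icc]; exact ENNReal.ofReal_ne_top) hmono
      rw [Real.volume_Icc, ENNReal.toReal_ofReal (by linarith)] at h2
      linarith
    have hKZ : 0 ≤ K / Znorm γ := by positivity
    calc (∫ θ in S, wfun γ θ) ≤ ‖∫ θ in S, wfun γ θ‖ := le_abs_self _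
      _ ≤ (K/Znorm γ) * (volume S).toReal := h
      _ ≤ (K/Znorm γ) * (2*π) := mul_le_mul_of_nonneg_left hμ hKZ
  have hSnonneg : 0 ≤ ∫ θ in S, wfun γ θ :=
    MeasureTheory.setIntegral_nonneg hSmeas (fun x hx => hwf_nonneg x hx.1.1 hx.1.2)
  have hur : (∫ θ in S, ustar γ θ) = (∫ θ in S, wfun γ θ) / W := by
    unfold ustar
    exact MeasureTheory.integral_div W (wfun γ)
  rw [hur]
  have hfinal : (∫ θ in S, wfun γ θ) / W ≤ (K/Znorm γ * (2*π)) / (LBc * (2*δ)) :=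
    div_le_div₀ (by positivity) hSint (by positivity) hWlow
  apply lt_of_le_of_lt hfinal
  -- final numeric step
  set Y := Real.exp ((2/γ) * (H - 6*δ)) with hYdef
  have hY0 : 0 < Y := Real.exp_pos _
  clear_value Y
  have hq : (K/Znorm γ * (2*π)) / (LBc * (2*δ)) = (K * (2*π)) / (δ * Y * (2*δ)) := by
    rw [hLBcdef]
    field_simp
  rw [hq, div_lt_iff₀ (by positivity)]
  -- key exponential estimates
  have hXY : Real.exp ((2/γ)*(H-d)) = Y * Real.exp (-(d/γ)) := by
    rw [hYdef, ← Real.exp_add]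
    congr 1
    rw [hδdef]
    field_simp
    ring
  have hexp1 : Real.exp (-(d/γ)) ≤ γ/d := by
    have h1 : d/γ ≤ Real.exp (d/γ) := by
      have := Real.add_one_le_exp (d/γ)
      linarith
    rw [Real.exp_neg]
    have h2 : 0 < d/γ := by positivity
    calc (Real.exp (d/γ))⁻¹ ≤ (d/γ)⁻¹ := by
          apply inv_anti₀ h2 h1
      _ = γ/d := by rw [inv_div]
    
  have hY1 : d/γ ≤ Y := by
    have h1 : Real.exp (d/γ) ≤ Y := by
      rw [hYdef]
      apply Real.exp_le_exp.2
      have ha : 0 < 2/γ := by positivity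
      have h6 : d/2 ≤ H - 6*δ := by rw [hδdef]; linarith only [hdH]
      have he : d/γ = (2/γ)*(d/2) := by field_simp
      rw [he]
      nlinarith
    have := Real.add_one_le_exp (d/γ)
    linarith
  have hX' : d * Real.exp ((2/γ)*(H-d)) ≤ Y * γ := by
    rw [hXY]
    have h := (le_div_iff₀ hd0).1 hexp1
    have h2 := mul_le_mul_of_nonneg_left h hY0.le
    linarith [h2]
  have h1Y' : d ≤ Y * γ := (div_le_iff₀ hγ0).1 hY1
  have hγ2 : γ * (4*π^2) < ε*δ^2*d := (lt_div_iff₀ (by positivity)).1 hγ1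
  have hint1 : 4*π^2 * (d * Real.exp ((2/γ)*(H-d))) ≤ 4*π^2 * (Y*γ) :=
    mul_le_mul_of_nonneg_left hX' (by positivity)
  have hint2 : 4*π^2 * d ≤ 4*π^2 * (Y*γ) :=
    mul_le_mul_of_nonneg_left h1Y' (by positivity)
  have hint3 : (2*Y) * (γ * (4*π^2)) < (2*Y) * (ε*δ^2*d) :=
    mul_lt_mul_of_pos_left hγ2 (by positivity)
  have hmul : K * (2*π) * d < ε * (δ*Y*(2*δ)) * d := by
    rw [hKdef]
    linarith only [hint1, hint2, hint3]
  exact lt_of_mul_lt_mul_right (by linarith) hd0.le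
end

section
/- There exist constants C > 0 and γ₀ > 0 such that for every 0 < γ < γ₀, the variance of the normalized density u* is at most Cγ; that is, ∫₀^{2π} θ² u*(θ) dθ − (∫₀^{2π} θ u*(θ) dθ)² ≤ C γ. -/
open Real

/- ======================================================================
   Auxiliary development for the proof (2-D Laplace method around the
   saddle (2π/3, 4π/3) of φ(θ)-φ(r), φ(t)=t+2 sin t).
   ====================================================================== -/

open Set MeasureTheory intervalIntegral

namespace SDV

noncomputable def p (t : ℝ) : ℝ := t + 2 * Real.sin t



lemma sqrt3_lb : (1.7320508 : ℝ) ≤ Real.sqrt 3 := by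
  nlinarith [Real.sq_sqrt (show (0:ℝ) ≤ 3 by norm_num), Real.sqrt_nonneg 3]

lemma sqrt3_ub : Real.sqrt 3 ≤ (1.7320509 : ℝ) := by
  nlinarith [Real.sq_sqrt (show (0:ℝ) ≤ 3 by norm_num), Real.sqrt_nonneg 3]

lemma cos_tpt : Real.cos (2*π/3) = -(1/2) := by
  have h : (2*π/3 : ℝ) = π - π/3 := by ring
  rw [h, Real.cos_pi_sub, Real.cos_pi_div_three]

lemma sin_tpt : Real.sin (2*π/3) = Real.sqrt 3 / 2 := by
  have h : (2*π/3 : ℝ) = π - π/3 := by ring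
  rw [h, Real.sin_pi_sub, Real.sin_pi_div_three]

lemma cos_fpt : Real.cos (4*π/3) = -(1/2) := by
  have h : (4*π/3 : ℝ) = 2*π - 2*π/3 := by ring
  rw [h, Real.cos_two_pi_sub, cos_tpt]

lemma sin_fpt : Real.sin (4*π/3) = -(Real.sqrt 3 / 2) := by
  have h : (4*π/3 : ℝ) = 2*π - 2*π/3 := by ring
  rw [h, Real.sin_two_pi_sub, sin_tpt]

lemma p_tpt : p (2*π/3) = 2*π/3 + Real.sqrt 3 := by
  unfold p; rw [sin_tpt]; ring

lemma p_fpt : p (4*π/3) = 4*π/3 - Real.sqrt 3 := by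
  unfold p; rw [sin_fpt]; ring

lemma p_symm (t : ℝ) : p (2*π - t) = 2*π - p t := by
  unfold p; rw [Real.sin_two_pi_sub]; ring

lemma p_hasDeriv (t : ℝ) : HasDerivAt p (1 + 2 * Real.cos t) t := by
  unfold p
  exact (hasDerivAt_id' t).add ((Real.hasDerivAt_sin t).const_mul 2)

lemma p_cont : Continuous p := by unfold p; continuity

/-- cos t ≥ -1/2 on [0, 2π/3] -/
lemma cos_ge_half1 {t : ℝ} (h0 : 0 ≤ t) (h1 : t ≤ 2*π/3) : -(1/2) ≤ Real.cos t := by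
  rw [← cos_tpt]
  exact Real.cos_le_cos_of_nonneg_of_le_pi h0 (by linarith [Real.pi_pos]) h1

/-- cos t ≤ -1/2 on [2π/3, 4π/3] -/
lemma cos_le_half {t : ℝ} (h0 : 2*π/3 ≤ t) (h1 : t ≤ 4*π/3) : Real.cos t ≤ -(1/2) := by
  rcases le_total t π with h | h
  · rw [← cos_tpt]
    exact Real.cos_le_cos_of_nonneg_of_le_pi (by positivity) h h0
  · have : Real.cos t = Real.cos (2*π - t) := by rw [Real.cos_two_pi_sub]
    rw [this, ← cos_tpt]
    exact Real.cos_le_cos_of_nonneg_of_le_pi (by linarith) (by linarith) (by linarith)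

/-- cos t ≥ -1/2 on [4π/3, 2π] -/
lemma cos_ge_half2 {t : ℝ} (h0 : 4*π/3 ≤ t) (h1 : t ≤ 2*π) : -(1/2) ≤ Real.cos t := by
  have : Real.cos t = Real.cos (2*π - t) := by rw [Real.cos_two_pi_sub]
  rw [this]
  exact cos_ge_half1 (by linarith) (by linarith)

lemma p_mono1 : MonotoneOn p (Icc (0:ℝ) (2*π/3)) := by
  have hpi := Real.pi_pos
  apply monotoneOn_of_deriv_nonneg (convex_Icc _ _) p_cont.continuousOn
    (fun x hx => (p_hasDeriv x).differentiableAt.differentiableWithinAt)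
  intro x hx
  rw [interior_Icc] at hx
  rw [(p_hasDeriv x).deriv]
  linarith [cos_ge_half1 hx.1.le hx.2.le]

lemma p_anti : AntitoneOn p (Icc (2*π/3) (4*π/3)) := by
  apply antitoneOn_of_deriv_nonpos (convex_Icc _ _) p_cont.continuousOn
    (fun x hx => (p_hasDeriv x).differentiableAt.differentiableWithinAt)
  intro x hx
  rw [interior_Icc] at hx
  rw [(p_hasDeriv x).deriv]
  linarith [cos_le_half hx.1.le hx.2.le]

lemma p_mono2 : MonotoneOn p (Icc (4*π/3) (2*π)) := by
  apply monotoneOn_of_deriv_nonneg (convex_Icc _ _) p_cont.continuousOn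
    (fun x hx => (p_hasDeriv x).differentiableAt.differentiableWithinAt)
  intro x hx
  rw [interior_Icc] at hx
  rw [(p_hasDeriv x).deriv]
  linarith [cos_ge_half2 hx.1.le hx.2.le]

lemma p_nonneg {t : ℝ} (h0 : 0 ≤ t) (h1 : t ≤ 2*π) : 0 ≤ p t := by
  unfold p
  rcases le_total t π with h | h
  · nlinarith [Real.sin_nonneg_of_nonneg_of_le_pi h0 h]
  · nlinarith [Real.neg_one_le_sin t, Real.pi_gt_three]

lemma p_le_two_pi {t : ℝ} (h0 : 0 ≤ t) (h1 : t ≤ 2*π) : p t ≤ 2*π := by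
  unfold p
  rcases le_total t π with h | h
  · nlinarith [Real.sin_le_one t, Real.pi_gt_three]
  · have : Real.sin t ≤ 0 := by
      have := Real.sin_nonneg_of_nonneg_of_le_pi (x := 2*π - t) (by linarith) (by linarith)
      rw [Real.sin_two_pi_sub] at this; linarith
    linarith



/-- sin u ≥ 3/4 for u ∈ [1, 2π/3] -/
lemma sin_ge_34 {u : ℝ} (h1 : 1 ≤ u) (h2 : u ≤ 2*π/3) : (3:ℝ)/4 ≤ Real.sin u := by
  have hpi := Real.pi_gt_d6
  have hpi' := Real.pi_lt_d6
  have hs1 : (3:ℝ)/4 ≤ Real.sin 1 := by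
    have := Real.sin_gt_sub_cube (by norm_num : (0:ℝ) < 1)
    norm_num at this; linarith
  rcases le_total u (π/2) with h | h
  · have : Real.sin 1 ≤ Real.sin u :=
      Real.sin_le_sin_of_le_of_le_pi_div_two (by linarith) h h1
    linarith
  · have heq : Real.sin u = Real.sin (π - u) := (Real.sin_pi_sub u).symm
    have h3 : π/3 ≤ π - u := by linarith
    have h4 : π - u ≤ π/2 := by linarith
    have : Real.sin (π/3) ≤ Real.sin (π - u) :=
      Real.sin_le_sin_of_le_of_le_pi_div_two (by linarith) h4 h3
    rw [Real.sin_pi_div_three] at this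
    rw [heq]
    nlinarith [sqrt3_lb]

/-- T_a : 1 - cos u + √3 sin u ≥ u/2 on [0, 2π/3] -/
lemma trig_a {u : ℝ} (h0 : 0 ≤ u) (h1 : u ≤ 2*π/3) :
    u/2 ≤ 1 - Real.cos u + Real.sqrt 3 * Real.sin u := by
  have hpi' := Real.pi_lt_d6
  rcases le_total u 1 with h | h
  · rcases eq_or_lt_of_le h0 with h' | h'
    · simp [← h']
    · have hs : u - u^3/4 < Real.sin u := by
        have := Real.sin_gt_sub_cube h'; linarith [pow_pos h' 3]
      have hc := Real.cos_le_one u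
      have hu2 : u^2 ≤ 1 := by nlinarith
      have hu3 : u^3 ≤ u := by nlinarith [mul_le_mul_of_nonneg_left hu2 h0]
      have hcub : 0 ≤ u - u^3/4 := by linarith
      have key : (1.7320508:ℝ)*(u - u^3/4) ≤ Real.sqrt 3 * Real.sin u :=
        mul_le_mul sqrt3_lb hs.le hcub (Real.sqrt_nonneg 3)
      linarith
  · have hs := sin_ge_34 h h1
    have hc := Real.cos_le_one u
    nlinarith [sqrt3_lb]

/-- T_b : cos x + √3 sin x ≥ 1 + x/2 on [0, π/3] -/
lemma trig_b {x : ℝ} (h0 : 0 ≤ x) (h1 : x ≤ π/3) :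
    1 + x/2 ≤ Real.cos x + Real.sqrt 3 * Real.sin x := by
  have hpi' := Real.pi_lt_d6
  rcases le_total x 1 with h | h
  · rcases eq_or_lt_of_le h0 with h' | h'
    · simp [← h']
    · have hs : x - x^3/4 < Real.sin x := by
        have := Real.sin_gt_sub_cube h'; linarith [pow_pos h' 3]
      have hc := Real.one_sub_sq_div_two_le_cos (x := x)
      have hx2 : x^2 ≤ x := by nlinarith [mul_le_mul_of_nonneg_right h h0]
      have hx3 : x^3 ≤ x^2 := by nlinarith [mul_le_mul_of_nonneg_left h (sq_nonneg x)]
      have hcub : 0 ≤ x - x^3/4 := by nlinarith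
      have key : (1.7320508:ℝ)*(x - x^3/4) ≤ Real.sqrt 3 * Real.sin x :=
        mul_le_mul sqrt3_lb hs.le hcub (Real.sqrt_nonneg 3)
      linarith
  · have hs : (3:ℝ)/4 ≤ Real.sin x := sin_ge_34 h (by linarith)
    have hc : Real.cos (π/3) ≤ Real.cos x :=
      Real.cos_le_cos_of_nonneg_of_le_pi h0 (by linarith) h1
    rw [Real.cos_pi_div_three] at hc
    nlinarith [sqrt3_lb]

noncomputable def g (θ : ℝ) : ℝ := p (2*π/3) - p θ - (θ - 2*π/3)^2/4

lemma g_hasDeriv (θ : ℝ) :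
    HasDerivAt g (-(1 + 2 * Real.cos θ) - (θ - 2*π/3)/2) θ := by
  unfold g
  have h1 := (p_hasDeriv θ)
  have h2 : HasDerivAt (fun θ : ℝ => (θ - 2*π/3)^2/4) ((θ - 2*π/3)/2) θ := by
    have : HasDerivAt (fun θ : ℝ => (θ - 2*π/3)) 1 θ := by
      simpa using (hasDerivAt_id θ).sub_const (2*π/3)
    have h3 := (this.pow 2).div_const 4
    refine h3.congr_deriv ?_
    ring
  have := ((hasDerivAt_const θ (p (2*π/3))).sub h1).sub h2
  refine this.congr_deriv ?_; ring

lemma g_cont : Continuous g := by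
  unfold g
  exact (continuous_const.sub p_cont).sub (by continuity)

lemma g_nonneg_1 {θ : ℝ} (h0 : 0 ≤ θ) (h1 : θ ≤ 2*π/3) : 0 ≤ g θ := by
  have hanti : AntitoneOn g (Icc (0:ℝ) (2*π/3)) := by
    apply antitoneOn_of_deriv_nonpos (convex_Icc _ _) g_cont.continuousOn
      (fun x hx => (g_hasDeriv x).differentiableAt.differentiableWithinAt)
    intro x hx
    rw [interior_Icc] at hx
    rw [(g_hasDeriv x).deriv]
    -- need (2π/3 - x)/2 ≤ 1 + 2 cos x
    have hu0 : 0 ≤ 2*π/3 - x := by linarith [hx.2]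
    have hu1 : 2*π/3 - x ≤ 2*π/3 := by linarith [hx.1]
    have hT := trig_a hu0 hu1
    have hcos : Real.cos x = -(Real.cos (2*π/3 - x))/2 + Real.sqrt 3/2 * Real.sin (2*π/3 - x) := by
      have : x = 2*π/3 - (2*π/3 - x) := by ring
      rw [this, Real.cos_sub, cos_tpt, sin_tpt]; ring_nf
    nlinarith [hcos]
  have := hanti ⟨h0, h1⟩ ⟨by positivity, le_refl _⟩ h1
  have hg0 : g (2*π/3) = 0 := by unfold g; ring
  linarith

lemma g_nonneg_2 {θ : ℝ} (h0 : 2*π/3 ≤ θ) (h1 : θ ≤ π) : 0 ≤ g θ := by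
  have hmono : MonotoneOn g (Icc (2*π/3) π) := by
    apply monotoneOn_of_deriv_nonneg (convex_Icc _ _) g_cont.continuousOn
      (fun x hx => (g_hasDeriv x).differentiableAt.differentiableWithinAt)
    intro x hx
    rw [interior_Icc] at hx
    rw [(g_hasDeriv x).deriv]
    have hx0 : 0 ≤ x - 2*π/3 := by linarith [hx.1]
    have hx1 : x - 2*π/3 ≤ π/3 := by linarith [hx.2]
    have hT := trig_b hx0 hx1
    have hcos : Real.cos x = -(Real.cos (x - 2*π/3))/2 - Real.sqrt 3/2 * Real.sin (x - 2*π/3) := by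
      have : x = 2*π/3 + (x - 2*π/3) := by ring
      nth_rewrite 1 [this]
      rw [Real.cos_add, cos_tpt, sin_tpt]; ring_nf
    nlinarith [hcos]
  have := hmono ⟨le_refl _, by linarith [Real.pi_gt_three]⟩ ⟨h0, h1⟩ h0
  have hg0 : g (2*π/3) = 0 := by unfold g; ring
  linarith

lemma g_nonneg_3 {θ : ℝ} (h0 : π ≤ θ) (h1 : θ ≤ 3.74) : 0 ≤ g θ := by
  have hpi := Real.pi_gt_d6
  have hpi' := Real.pi_lt_d6
  have hp : p θ ≤ p π := by
    apply p_anti ⟨by linarith, by linarith⟩ ⟨by linarith, by linarith⟩ h0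
  have hppi : p π = π := by unfold p; rw [Real.sin_pi]; ring
  unfold g
  rw [p_tpt]
  have h2 : (θ - 2*π/3)^2 ≤ (3.74 - 2*π/3)^2 := by nlinarith
  nlinarith [sqrt3_lb]

lemma g_nonneg_4 {θ : ℝ} (h0 : (3.74:ℝ) ≤ θ) (h1 : θ ≤ 4*π/3) : 0 ≤ g θ := by
  have hpi := Real.pi_gt_d6
  have hpi' := Real.pi_lt_d6
  have hp : p θ ≤ p 3.74 := by
    apply p_anti ⟨by linarith, by linarith⟩ ⟨by linarith, h1⟩ h0
  -- bound p 3.74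
  have hsin : Real.sin 3.74 ≤ -0.5448 := by
    have h374 : Real.sin (3.74:ℝ) = -Real.sin (2*π - 3.74) := by
      rw [Real.sin_two_pi_sub]; ring_nf
    have heq2 : Real.sin (2*π - 3.74) = Real.sin (π - (2*π - 3.74)) := (Real.sin_pi_sub _).symm
    have hz : π - (2*π - 3.74) = 3.74 - π := by ring
    rw [h374, heq2, hz]
    have hz0 : (0:ℝ) < 3.74 - π := by linarith
    have hz1 : (3.74:ℝ) - π ≤ 1 := by linarith
    have hmain := Real.sin_gt_sub_cube hz0
    have hz2 : (3.74:ℝ) - π ≤ 0.598408 := by linarith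
    have hz3 : (0.598407:ℝ) ≤ 3.74 - π := by linarith
    have hzz : ((3.74:ℝ) - π)^2 ≤ 0.598408^2 := by nlinarith
    have hcube : ((3.74:ℝ)-π)^3 ≤ 0.21429 := by
      nlinarith [mul_le_mul_of_nonneg_right hzz hz0.le]
    linarith
  have hp374 : p 3.74 ≤ 2.6504 := by
    unfold p; nlinarith
  unfold g
  rw [p_tpt]
  have h2 : (θ - 2*π/3)^2 ≤ (2*π/3)^2 := by nlinarith
  nlinarith [sqrt3_lb]

/-- Main quadratic lemma: p(2π/3) - p θ ≥ (θ-2π/3)²/4 on [0, 4π/3]. -/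
lemma lemmaA {θ : ℝ} (h0 : 0 ≤ θ) (h1 : θ ≤ 4*π/3) :
    (θ - 2*π/3)^2/4 ≤ p (2*π/3) - p θ := by
  have hpi := Real.pi_gt_d6
  have hpi' := Real.pi_lt_d6
  have : 0 ≤ g θ := by
    rcases le_total θ (2*π/3) with h | h
    · exact g_nonneg_1 h0 h
    rcases le_total θ π with h' | h'
    · exact g_nonneg_2 h h'
    rcases le_total θ 3.74 with h'' | h''
    · exact g_nonneg_3 h' h''
    · exact g_nonneg_4 h'' h1
  unfold g at this; linarith

lemma lemmaB1 {r : ℝ} (h0 : 2*π/3 ≤ r) (h1 : r ≤ 4*π/3 + 1) :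
    (r - 4*π/3)^2/4 ≤ p r - p (4*π/3) := by
  have hpi := Real.pi_gt_d6
  have hpi' := Real.pi_lt_d6
  have key := lemmaA (θ := 2*π - r) (by linarith) (by linarith)
  have h2 : p (2*π - (2*π - r)) = 2*π - p (2*π - r) := p_symm _
  have h3 : (2*π - (2*π - r) : ℝ) = r := by ring
  rw [h3] at h2
  have h4 : p (2*π - (2*π/3)) = 2*π - p (2*π/3) := p_symm _
  have h5 : (2*π - 2*π/3 : ℝ) = 4*π/3 := by ring
  rw [h5] at h4
  have h6 : ((2*π - r) - 2*π/3)^2 = (r - 4*π/3)^2 := by ring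
  rw [h6] at key
  linarith

lemma lemmaB2 {r : ℝ} (h0 : 4*π/3 + 1 ≤ r) (h1 : r ≤ 2*π) :
    (1:ℝ)/4 ≤ p r - p (4*π/3) := by
  have hpi := Real.pi_gt_d6
  have hpi' := Real.pi_lt_d6
  have h2 : p (4*π/3+1) ≤ p r :=
    p_mono2 ⟨by linarith, by linarith⟩ ⟨by linarith, h1⟩ h0
  have h3 := lemmaB1 (r := 4*π/3+1) (by linarith) (by linarith)
  have h4 : ((4*π/3+1) - 4*π/3 : ℝ)^2 = 1 := by ring
  rw [h4] at h3
  linarith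


lemma abs_x_sub_sin {x : ℝ} (h : |x| ≤ 1) : |x - Real.sin x| ≤ x^2 := by
  have key : ∀ y : ℝ, 0 ≤ y → y ≤ 1 → |y - Real.sin y| ≤ y^2 := by
    intro y h0 h1
    rcases eq_or_lt_of_le h0 with h' | h'
    · simp [← h']
    · have hs := Real.sin_gt_sub_cube h'
      have hs2 := Real.sin_lt h'
      have hy3 : y^3 ≤ y^2 := by nlinarith [mul_le_mul_of_nonneg_left h1 (sq_nonneg y)]
      rw [abs_le]
      constructor <;> nlinarith
  rcases le_total 0 x with h0 | h0
  · exact key x h0 (by rwa [abs_of_nonneg h0] at h)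
  · have := key (-x) (by linarith) (by rwa [abs_of_nonpos h0] at h)
    rw [Real.sin_neg] at this
    rw [show -x - -Real.sin x = -(x - Real.sin x) by ring, abs_neg] at this
    rwa [show ((-x):ℝ)^2 = x^2 by ring] at this

lemma one_sub_cos_le {x : ℝ} : 1 - Real.cos x ≤ x^2/2 := by
  linarith [Real.one_sub_sq_div_two_le_cos (x := x)]

/-- expansion of p near 2π/3 -/
lemma p_expand1 (x : ℝ) : p (2*π/3 + x) - p (2*π/3)
    = (x - Real.sin x) - Real.sqrt 3 * (1 - Real.cos x) := by
  unfold p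
  rw [Real.sin_add, sin_tpt, cos_tpt]
  ring

lemma p_expand2 (x : ℝ) : p (4*π/3 + x) - p (4*π/3)
    = (x - Real.sin x) + Real.sqrt 3 * (1 - Real.cos x) := by
  unfold p
  rw [Real.sin_add, sin_fpt, cos_fpt]
  ring

lemma taylor1 {x : ℝ} (h : |x| ≤ 1) : p (2*π/3) - 2*x^2 ≤ p (2*π/3 + x) := by
  have h1 := p_expand1 x
  have h2 := abs_x_sub_sin h
  have h3 := one_sub_cos_le (x := x)
  have h4 : 0 ≤ 1 - Real.cos x := by linarith [Real.cos_le_one x]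
  rw [abs_le] at h2
  nlinarith [sqrt3_ub, sqrt3_lb, sq_nonneg x,
    mul_le_mul_of_nonneg_left h3 (Real.sqrt_nonneg 3)]

lemma taylor2 {x : ℝ} (h : |x| ≤ 1) : p (4*π/3 + x) ≤ p (4*π/3) + 2*x^2 := by
  have h1 := p_expand2 x
  have h2 := abs_x_sub_sin h
  have h3 := one_sub_cos_le (x := x)
  have h4 : 0 ≤ 1 - Real.cos x := by linarith [Real.cos_le_one x]
  rw [abs_le] at h2
  nlinarith [sqrt3_ub, sq_nonneg x,
    mul_le_mul_of_nonneg_left h3 (Real.sqrt_nonneg 3)]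

/-- Hm = p(2π/3) - p(4π/3) = 2√3 - 2π/3; numeric fact 1 ≤ Hm ≤ 1.37 -/
lemma Hm_ge_one : 1 ≤ p (2*π/3) - p (4*π/3) := by
  rw [p_tpt, p_fpt]
  have := Real.pi_lt_d6
  nlinarith [sqrt3_lb]

/-- key numeric margin: θ₀²/4 + 1/4 ≤ Hm -/
lemma margin : (2*π/3)^2/4 + 1/4 ≤ p (2*π/3) - p (4*π/3) := by
  rw [p_tpt, p_fpt]
  have h1 := Real.pi_gt_d6
  have h2 := Real.pi_lt_d6
  nlinarith [sqrt3_lb]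


/-- the max of the 2-d Laplace exponent -/
noncomputable def Hm : ℝ := p (2*π/3) - p (4*π/3)

noncomputable def f (a r : ℝ) : ℝ := Real.exp (-a * p r)
noncomputable def If (a θ : ℝ) : ℝ := ∫ r in (0:ℝ)..θ, f a r
noncomputable def Jf (a θ : ℝ) : ℝ := ∫ r in θ..(2*π), f a r
noncomputable def W (a θ : ℝ) : ℝ :=
  Real.exp (a * p θ) * Jf a θ + Real.exp (-(2*π)*a) * Real.exp (a * p θ) * If a θ

lemma f_cont {a : ℝ} : Continuous (f a) := by
  unfold f; exact Real.continuous_exp.comp (continuous_const.mul p_cont)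

lemma f_pos {a r : ℝ} : 0 < f a r := Real.exp_pos _

lemma If_cont {a : ℝ} : Continuous (If a) :=
  intervalIntegral.continuous_primitive (fun u v => f_cont.intervalIntegrable u v) 0

lemma Jf_eq {a θ : ℝ} : Jf a θ = -∫ r in (2*π)..θ, f a r := by
  unfold Jf; rw [intervalIntegral.integral_symm]

lemma Jf_cont {a : ℝ} : Continuous (Jf a) := by
  have : Continuous fun θ => ∫ r in (2*π)..θ, f a r :=
    intervalIntegral.continuous_primitive (fun u v => f_cont.intervalIntegrable u v) (2*π)
  have h2 := this.neg
  convert h2 using 1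
  funext θ; exact Jf_eq

lemma W_cont {a : ℝ} : Continuous (W a) := by
  unfold W
  have h1 : Continuous fun θ => Real.exp (a * p θ) :=
    Real.continuous_exp.comp (continuous_const.mul p_cont)
  exact ((h1.mul Jf_cont).add ((continuous_const.mul h1).mul If_cont))

lemma If_nonneg {a θ : ℝ} (h : 0 ≤ θ) : 0 ≤ If a θ :=
  intervalIntegral.integral_nonneg h (fun r _ => f_pos.le)

lemma Jf_nonneg {a θ : ℝ} (h : θ ≤ 2*π) : 0 ≤ Jf a θ :=
  intervalIntegral.integral_nonneg h (fun r _ => f_pos.le)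

lemma W_nonneg {a θ : ℝ} (h0 : 0 ≤ θ) (h1 : θ ≤ 2*π) : 0 ≤ W a θ := by
  unfold W
  have := If_nonneg (a := a) h0
  have := Jf_nonneg (a := a) h1
  positivity

lemma IJ_split {a θ : ℝ} : If a θ + Jf a θ = If a (2*π) :=
  intervalIntegral.integral_add_adjacent_intervals
    (f_cont.intervalIntegrable _ _) (f_cont.intervalIntegrable _ _)

/-- integral of nonneg function over subinterval is at most integral over interval -/
lemma middle_le {F : ℝ → ℝ} (hF : Continuous F) {A u v B : ℝ} (hAu : A ≤ u) (huv : u ≤ v)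
    (hvB : v ≤ B) (hnn : ∀ x, x ∈ Icc A B → 0 ≤ F x) :
    ∫ x in u..v, F x ≤ ∫ x in A..B, F x := by
  have i1 : 0 ≤ ∫ x in A..u, F x :=
    intervalIntegral.integral_nonneg hAu
      (fun x hx => hnn x ⟨hx.1, le_trans hx.2 (le_trans huv hvB)⟩)
  have i2 : 0 ≤ ∫ x in v..B, F x :=
    intervalIntegral.integral_nonneg hvB
      (fun x hx => hnn x ⟨le_trans hAu (le_trans huv hx.1), hx.2⟩)
  have e1 : (∫ x in A..u, F x) + ∫ x in u..v, F x = ∫ x in A..v, F x :=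
    intervalIntegral.integral_add_adjacent_intervals
      (hF.intervalIntegrable _ _) (hF.intervalIntegrable _ _)
  have e2 : (∫ x in A..v, F x) + ∫ x in v..B, F x = ∫ x in A..B, F x :=
    intervalIntegral.integral_add_adjacent_intervals
      (hF.intervalIntegrable _ _) (hF.intervalIntegrable _ _)
  linarith

lemma gauss_bound {b c u v : ℝ} (hb : 0 < b) (huv : u ≤ v) :
    ∫ r in u..v, Real.exp (-(b*(r-c)^2)) ≤ Real.sqrt (π/b) := by
  have hint : MeasureTheory.Integrable (fun x : ℝ => Real.exp (-(b*(x-c)^2))) := by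
    have h0 := integrable_exp_neg_mul_sq hb
    have := h0.comp_sub_right c
    simpa [neg_mul] using this
  rw [intervalIntegral.integral_of_le huv]
  have h1 : ∫ r in Set.Ioc u v, Real.exp (-(b*(r-c)^2)) ≤ ∫ x : ℝ, Real.exp (-(b*(x-c)^2)) :=
    MeasureTheory.setIntegral_le_integral hint
      (Filter.Eventually.of_forall fun x => (Real.exp_pos _).le)
  have h2 : ∫ x : ℝ, Real.exp (-(b*(x-c)^2)) = Real.sqrt (π/b) := by
    have := MeasureTheory.integral_sub_right_eq_self
      (μ := MeasureTheory.volume) (fun x : ℝ => Real.exp (-(b*x^2))) c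
    rw [this]
    simpa [neg_mul] using integral_gaussian b
  linarith

lemma sup_trick {a y : ℝ} (ha : 0 < a) (hy : 0 ≤ y) :
    y * Real.exp (-(a/4*y)) ≤ (8/a) * Real.exp (-(a/8*y)) := by
  have h1 := Real.add_one_le_exp (a/8*y)
  have h2 : y ≤ 8/a * Real.exp (a/8*y) := by
    rw [div_mul_eq_mul_div, le_div_iff₀ ha]
    nlinarith
  have h3 : Real.exp (-(a/4*y)) = Real.exp (-(a/8*y)) * Real.exp (-(a/8*y)) := by
    rw [← Real.exp_add]; ring_nf
  have h4 : (0:ℝ) < Real.exp (-(a/8*y)) := Real.exp_pos _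
  calc y * Real.exp (-(a/4*y))
      = (y * Real.exp (-(a/8*y))) * Real.exp (-(a/8*y)) := by rw [h3]; ring
    _ ≤ ((8/a * Real.exp (a/8*y)) * Real.exp (-(a/8*y))) * Real.exp (-(a/8*y)) := by
        apply mul_le_mul_of_nonneg_right (mul_le_mul_of_nonneg_right h2 h4.le) h4.le
    _ = (8/a) * (Real.exp (a/8*y) * Real.exp (-(a/8*y))) * Real.exp (-(a/8*y)) := by ring
    _ = (8/a) * Real.exp (-(a/8*y)) := by rw [← Real.exp_add]; simp

section NumericHelpers
variable {a : ℝ}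

lemma sqrtA_ge (ha : 200 ≤ a) : 14 ≤ Real.sqrt a := by
  have : (14:ℝ) = Real.sqrt 196 := by
    rw [show (196:ℝ) = 14^2 by norm_num, Real.sqrt_sq (by norm_num)]
  rw [this]
  exact Real.sqrt_le_sqrt (by linarith)

lemma sqrtA_sq (ha : 200 ≤ a) : Real.sqrt a ^ 2 = a := Real.sq_sqrt (by linarith)

lemma sqrt_bound1 (ha : 200 ≤ a) : Real.sqrt (π/(a/4)) ≤ 4/Real.sqrt a := by
  have ha0 : (0:ℝ) < a := by linarith
  have h1 : π/(a/4) ≤ 16/a := by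
    rw [div_le_div_iff₀ (by positivity) ha0]
    nlinarith [Real.pi_lt_d6]
  have h2 : Real.sqrt (16/a) = 4/Real.sqrt a := by
    rw [show (16:ℝ)/a = (4/Real.sqrt a)^2 by
      rw [div_pow]; rw [sqrtA_sq ha]; norm_num]
    exact Real.sqrt_sq (by positivity)
  calc Real.sqrt (π/(a/4)) ≤ Real.sqrt (16/a) := Real.sqrt_le_sqrt h1
    _ = 4/Real.sqrt a := h2

lemma sqrt_bound2 (ha : 200 ≤ a) : Real.sqrt (π/(a/8)) ≤ 6/Real.sqrt a := by
  have ha0 : (0:ℝ) < a := by linarith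
  have h1 : π/(a/8) ≤ 36/a := by
    rw [div_le_div_iff₀ (by positivity) ha0]
    nlinarith [Real.pi_lt_d6]
  have h2 : Real.sqrt (36/a) = 6/Real.sqrt a := by
    rw [show (36:ℝ)/a = (6/Real.sqrt a)^2 by
      rw [div_pow]; rw [sqrtA_sq ha]; norm_num]
    exact Real.sqrt_sq (by positivity)
  calc Real.sqrt (π/(a/8)) ≤ Real.sqrt (36/a) := Real.sqrt_le_sqrt h1
    _ = 6/Real.sqrt a := h2

lemma exp_quarter (ha : 200 ≤ a) : Real.exp (-(a/4)) ≤ 4/a := by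
  have ha0 : (0:ℝ) < a := by linarith
  have h1 : a/4 ≤ Real.exp (a/4) := by linarith [Real.add_one_le_exp (a/4)]
  rw [Real.exp_neg]
  rw [inv_le_iff_one_le_mul₀ (Real.exp_pos _), ← div_le_iff₀' (by positivity : (0:ℝ) < 4/a)]
  calc (1:ℝ)/(4/a) = a/4 := by field_simp
    _ ≤ Real.exp (a/4) := h1

/-- K := √(π/(a/4)) + 2π e^{-a/4} ≤ 6/√a -/
lemma K_bound (ha : 200 ≤ a) :
    Real.sqrt (π/(a/4)) + 2*π*Real.exp (-(a/4)) ≤ 6/Real.sqrt a := by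
  have ha0 : (0:ℝ) < a := by linarith
  have h1 := sqrt_bound1 ha
  have h2 := exp_quarter ha
  have h3 := sqrtA_ge ha
  have h4 : 0 < Real.sqrt a := by linarith
  have h5 : 2*π*Real.exp (-(a/4)) ≤ 2*π*(4/a) := by
    apply mul_le_mul_of_nonneg_left h2 (by positivity)
  have h6 : 2*π*(4/a) ≤ 2/Real.sqrt a := by
    rw [show 2*π*(4/a) = (8*π)/a by ring, div_le_div_iff₀ ha0 h4]
    have hs : a = Real.sqrt a * Real.sqrt a :=
      (Real.mul_self_sqrt (by linarith : (0:ℝ) ≤ a)).symm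
    nlinarith [Real.pi_lt_d6]
  have h7 : 4/Real.sqrt a + 2/Real.sqrt a = 6/Real.sqrt a := by ring
  linarith

lemma exp_a_ge (ha : 200 ≤ a) : a^4/256 ≤ Real.exp a := by
  have h1 : Real.exp a = (Real.exp (a/4))^4 := by
    rw [← Real.exp_nat_mul]; push_cast; ring_nf
  have h2 : a/4 ≤ Real.exp (a/4) := by linarith [Real.add_one_le_exp (a/4)]
  have h3 : (a/4)^4 ≤ (Real.exp (a/4))^4 :=
    pow_le_pow_left₀ (by linarith) h2 4
  rw [h1]
  calc a^4/256 = (a/4)^4 := by ring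
    _ ≤ _ := h3

lemma exp_four_le : Real.exp 4 ≤ 55 := by
  have h1 : Real.exp 4 = (Real.exp 1)^4 := by
    rw [← Real.exp_nat_mul]; norm_num
  have h2 := Real.exp_one_lt_d9
  have h0 := Real.exp_pos 1
  have h3 : Real.exp 1 ^ 2 ≤ 7.3890561 := by nlinarith
  rw [h1]
  nlinarith [sq_nonneg (Real.exp 1 ^ 2)]

end NumericHelpers

section CoreEstimates
variable {a : ℝ}

/-- pointwise two-dimensional Laplace bound -/
lemma pointwise_bound (ha : 0 < a) {θ r : ℝ} (hθ0 : 0 ≤ θ) (hθ1 : θ ≤ 4*π/3)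
    (hr0 : θ ≤ r) (hr1 : r ≤ 2*π) :
    Real.exp (a * p θ) * f a r ≤
      Real.exp (a*Hm - a*(θ-2*π/3)^2/4) *
        (Real.exp (-(a/4*(r-4*π/3)^2)) + Real.exp (-(a/4))) := by
  have hpi := Real.pi_gt_d6
  have hpi' := Real.pi_lt_d6
  have hA := lemmaA hθ0 hθ1
  have hA' := mul_le_mul_of_nonneg_left hA ha.le
  have lhs_eq : Real.exp (a * p θ) * f a r = Real.exp (a * (p θ - p r)) := by
    unfold f; rw [← Real.exp_add]; ring_nf
  rw [lhs_eq]
  rcases le_total r (2*π/3) with hc | hc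
  · have hmono : p θ ≤ p r := p_mono1 ⟨hθ0, le_trans hr0 hc⟩ ⟨le_trans hθ0 hr0, hc⟩ hr0
    have hL : Real.exp (a * (p θ - p r)) ≤ 1 := by
      rw [show (1:ℝ) = Real.exp 0 by simp]
      apply Real.exp_le_exp.2
      nlinarith
    have hsq : (θ - 2*π/3)^2 ≤ (2*π/3)^2 := by nlinarith
    have hexp0 : (0:ℝ) ≤ a*Hm - a*(θ-2*π/3)^2/4 - a/4 := by
      have hm := margin
      have hin : (0:ℝ) ≤ Hm - (θ-2*π/3)^2/4 - 1/4 := by unfold Hm; linarith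
      nlinarith [mul_nonneg ha.le hin]
    have hR : (1:ℝ) ≤ Real.exp (a*Hm - a*(θ-2*π/3)^2/4) * Real.exp (-(a/4)) := by
      rw [← Real.exp_add, show (1:ℝ) = Real.exp 0 by simp]
      apply Real.exp_le_exp.2; linarith
    calc Real.exp (a * (p θ - p r)) ≤ 1 := hL
      _ ≤ Real.exp (a*Hm - a*(θ-2*π/3)^2/4) * Real.exp (-(a/4)) := hR
      _ ≤ _ := by
          rw [mul_add]
          nlinarith [Real.exp_pos (a*Hm - a*(θ-2*π/3)^2/4),
            Real.exp_pos (-(a/4*(r-4*π/3)^2)),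
            mul_pos (Real.exp_pos (a*Hm - a*(θ-2*π/3)^2/4))
              (Real.exp_pos (-(a/4*(r-4*π/3)^2)))]
  · rcases le_total r (4*π/3+1) with hd | hd
    · have hB := lemmaB1 hc hd
      have hB' := mul_le_mul_of_nonneg_left hB ha.le
      have hexp : a * (p θ - p r) ≤ (a*Hm - a*(θ-2*π/3)^2/4) + (-(a/4*(r-4*π/3)^2)) := by
        unfold Hm; nlinarith
      calc Real.exp (a * (p θ - p r))
          ≤ Real.exp ((a*Hm - a*(θ-2*π/3)^2/4) + (-(a/4*(r-4*π/3)^2))) := Real.exp_le_exp.2 hexp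
        _ = Real.exp (a*Hm - a*(θ-2*π/3)^2/4) * Real.exp (-(a/4*(r-4*π/3)^2)) := Real.exp_add _ _
        _ ≤ _ := by
            rw [mul_add]
            nlinarith [Real.exp_pos (a*Hm - a*(θ-2*π/3)^2/4), Real.exp_pos (-(a/4)),
              mul_pos (Real.exp_pos (a*Hm - a*(θ-2*π/3)^2/4)) (Real.exp_pos (-(a/4)))]
    · have hB := lemmaB2 hd hr1
      have hB' := mul_le_mul_of_nonneg_left hB ha.le
      have hexp : a * (p θ - p r) ≤ (a*Hm - a*(θ-2*π/3)^2/4) + (-(a/4)) := by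
        unfold Hm; nlinarith
      calc Real.exp (a * (p θ - p r))
          ≤ Real.exp ((a*Hm - a*(θ-2*π/3)^2/4) + (-(a/4))) := Real.exp_le_exp.2 hexp
        _ = Real.exp (a*Hm - a*(θ-2*π/3)^2/4) * Real.exp (-(a/4)) := Real.exp_add _ _
        _ ≤ _ := by
            rw [mul_add]
            nlinarith [Real.exp_pos (a*Hm - a*(θ-2*π/3)^2/4),
              Real.exp_pos (-(a/4*(r-4*π/3)^2)),
              mul_pos (Real.exp_pos (a*Hm - a*(θ-2*π/3)^2/4))
                (Real.exp_pos (-(a/4*(r-4*π/3)^2)))]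

lemma slice_bound (ha : 0 < a) {θ : ℝ} (hθ0 : 0 ≤ θ) (hθ1 : θ ≤ 4*π/3) :
    Real.exp (a * p θ) * Jf a θ ≤
      Real.exp (a*Hm - a*(θ-2*π/3)^2/4) *
        (Real.sqrt (π/(a/4)) + 2*π*Real.exp (-(a/4))) := by
  have hpi := Real.pi_gt_d6
  have hpi' := Real.pi_lt_d6
  have hθ2π : θ ≤ 2*π := by linarith
  have h1 : Real.exp (a * p θ) * Jf a θ = ∫ r in θ..(2*π), Real.exp (a * p θ) * f a r := by
    unfold Jf; rw [intervalIntegral.integral_const_mul]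
  rw [h1]
  have hcont2 : Continuous fun r => Real.exp (a*Hm - a*(θ-2*π/3)^2/4) *
      (Real.exp (-(a/4*(r-4*π/3)^2)) + Real.exp (-(a/4))) := by
    apply continuous_const.mul
    apply Continuous.add _ continuous_const
    exact Real.continuous_exp.comp (by continuity)
  have h2 : ∫ r in θ..(2*π), Real.exp (a * p θ) * f a r ≤
      ∫ r in θ..(2*π), Real.exp (a*Hm - a*(θ-2*π/3)^2/4) *
        (Real.exp (-(a/4*(r-4*π/3)^2)) + Real.exp (-(a/4))) := by
    apply intervalIntegral.integral_mono_on hθ2π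
      ((continuous_const.mul f_cont).intervalIntegrable _ _)
      (hcont2.intervalIntegrable _ _)
    intro r hr
    exact pointwise_bound ha hθ0 hθ1 hr.1 hr.2
  have h3 : ∫ r in θ..(2*π), Real.exp (a*Hm - a*(θ-2*π/3)^2/4) *
        (Real.exp (-(a/4*(r-4*π/3)^2)) + Real.exp (-(a/4)))
      = Real.exp (a*Hm - a*(θ-2*π/3)^2/4) *
        ∫ r in θ..(2*π), (Real.exp (-(a/4*(r-4*π/3)^2)) + Real.exp (-(a/4))) := by
    rw [intervalIntegral.integral_const_mul]
  have hgc : Continuous fun r : ℝ => Real.exp (-(a/4*(r-4*π/3)^2)) :=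
    Real.continuous_exp.comp (by continuity)
  have h4 : ∫ r in θ..(2*π), (Real.exp (-(a/4*(r-4*π/3)^2)) + Real.exp (-(a/4)))
      = (∫ r in θ..(2*π), Real.exp (-(a/4*(r-4*π/3)^2))) + (2*π - θ) * Real.exp (-(a/4)) := by
    rw [intervalIntegral.integral_add (hgc.intervalIntegrable _ _)
      (intervalIntegrable_const), intervalIntegral.integral_const, smul_eq_mul]
  have h5 : (∫ r in θ..(2*π), Real.exp (-(a/4*(r-4*π/3)^2))) ≤ Real.sqrt (π/(a/4)) :=
    gauss_bound (by positivity) hθ2π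
  have h6 : (2*π - θ) * Real.exp (-(a/4)) ≤ 2*π*Real.exp (-(a/4)) := by
    apply mul_le_mul_of_nonneg_right (by linarith) (Real.exp_pos _).le
  calc (∫ r in θ..(2*π), Real.exp (a * p θ) * f a r) ≤ _ := h2
    _ = _ := h3
    _ ≤ _ := by
        apply mul_le_mul_of_nonneg_left _ (Real.exp_pos _).le
        rw [h4]; linarith

lemma gauss_int_nonneg {b c u v : ℝ} (huv : u ≤ v) :
    0 ≤ ∫ r in u..v, Real.exp (-(b*(r-c)^2)) :=
  intervalIntegral.integral_nonneg huv (fun x _ => (Real.exp_pos _).le)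

/-- main Laplace piece: ∫₀^{4π/3} (θ-θ₀)² e^{apθ} J ≤ 288 e^{aHm}/a² -/
lemma S2a1 (ha : 200 ≤ a) :
    ∫ θ in (0:ℝ)..(4*π/3), (θ-2*π/3)^2 * (Real.exp (a * p θ) * Jf a θ)
      ≤ 288 * Real.exp (a*Hm) / a^2 := by
  have ha0 : (0:ℝ) < a := by linarith
  have hpi := Real.pi_gt_d6
  set K := Real.sqrt (π/(a/4)) + 2*π*Real.exp (-(a/4)) with hK
  have hK0 : (0:ℝ) ≤ K := by positivity
  have hKb : K ≤ 6/Real.sqrt a := K_bound ha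
  have hpt : ∀ θ ∈ Icc (0:ℝ) (4*π/3), (θ-2*π/3)^2 * (Real.exp (a * p θ) * Jf a θ)
      ≤ (Real.exp (a*Hm) * K * (8/a)) * Real.exp (-(a/8*(θ-2*π/3)^2)) := by
    intro θ hθ
    have h1 := slice_bound ha0 hθ.1 hθ.2
    have h2 : (θ-2*π/3)^2 * (Real.exp (a*p θ) * Jf a θ) ≤
        (θ-2*π/3)^2 * (Real.exp (a*Hm - a*(θ-2*π/3)^2/4) * K) :=
      mul_le_mul_of_nonneg_left h1 (sq_nonneg _)
    have h3 : Real.exp (a*Hm - a*(θ-2*π/3)^2/4)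
        = Real.exp (a*Hm) * Real.exp (-(a/4*(θ-2*π/3)^2)) := by
      rw [← Real.exp_add]; ring_nf
    have h4 := sup_trick (y := (θ-2*π/3)^2) ha0 (sq_nonneg _)
    calc (θ-2*π/3)^2 * (Real.exp (a*p θ) * Jf a θ)
        ≤ (θ-2*π/3)^2 * (Real.exp (a*Hm - a*(θ-2*π/3)^2/4) * K) := h2
      _ = Real.exp (a*Hm) * K * ((θ-2*π/3)^2 * Real.exp (-(a/4*(θ-2*π/3)^2))) := by
          rw [h3]; ring
      _ ≤ Real.exp (a*Hm) * K * ((8/a) * Real.exp (-(a/8*(θ-2*π/3)^2))) := by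
          apply mul_le_mul_of_nonneg_left h4 (by positivity)
      _ = (Real.exp (a*Hm) * K * (8/a)) * Real.exp (-(a/8*(θ-2*π/3)^2)) := by ring
  have hb1 : (0:ℝ) ≤ 4*π/3 := by positivity
  have hcL : Continuous fun θ => (θ-2*π/3)^2 * (Real.exp (a * p θ) * Jf a θ) := by
    apply Continuous.mul (by continuity)
    exact (Real.continuous_exp.comp (continuous_const.mul p_cont)).mul Jf_cont
  have hcR : Continuous fun θ : ℝ =>
      (Real.exp (a*Hm) * K * (8/a)) * Real.exp (-(a/8*(θ-2*π/3)^2)) :=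
    continuous_const.mul (Real.continuous_exp.comp (by continuity))
  have hint : ∫ θ in (0:ℝ)..(4*π/3), (θ-2*π/3)^2 * (Real.exp (a * p θ) * Jf a θ)
      ≤ ∫ θ in (0:ℝ)..(4*π/3),
          (Real.exp (a*Hm) * K * (8/a)) * Real.exp (-(a/8*(θ-2*π/3)^2)) :=
    intervalIntegral.integral_mono_on hb1 (hcL.intervalIntegrable _ _)
      (hcR.intervalIntegrable _ _) hpt
  have hg : ∫ θ in (0:ℝ)..(4*π/3),
      (Real.exp (a*Hm) * K * (8/a)) * Real.exp (-(a/8*(θ-2*π/3)^2))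
      = (Real.exp (a*Hm) * K * (8/a)) * ∫ θ in (0:ℝ)..(4*π/3), Real.exp (-(a/8*(θ-2*π/3)^2)) :=
    intervalIntegral.integral_const_mul _ _
  set G := ∫ θ in (0:ℝ)..(4*π/3), Real.exp (-(a/8*(θ-2*π/3)^2)) with hG
  have hG0 : 0 ≤ G := gauss_int_nonneg hb1
  have hGb : G ≤ 6/Real.sqrt a :=
    le_trans (gauss_bound (by positivity) hb1) (sqrt_bound2 ha)
  have hsq : Real.sqrt a ^ 2 = a := sqrtA_sq ha
  have hs0 : (0:ℝ) < Real.sqrt a := by linarith [sqrtA_ge ha]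
  have hKG : K * G ≤ 36/a := by
    have h1 : K * G ≤ (6/Real.sqrt a) * (6/Real.sqrt a) :=
      mul_le_mul hKb hGb hG0 (by positivity)
    have h2 : (6/Real.sqrt a) * (6/Real.sqrt a) = 36/a := by
      rw [div_mul_div_comm]; congr 1; · norm_num
      · nlinarith
    linarith [h1, h2.symm.le]
  have hE : (0:ℝ) < Real.exp (a*Hm) := Real.exp_pos _
  calc ∫ θ in (0:ℝ)..(4*π/3), (θ-2*π/3)^2 * (Real.exp (a * p θ) * Jf a θ)
      ≤ (Real.exp (a*Hm) * K * (8/a)) * G := by rw [← hg]; exact hint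
    _ = Real.exp (a*Hm) * (8/a) * (K * G) := by ring
    _ ≤ Real.exp (a*Hm) * (8/a) * (36/a) := by
        apply mul_le_mul_of_nonneg_left hKG (by positivity)
    _ = 288 * Real.exp (a*Hm) / a^2 := by field_simp; ring

/-- tail piece θ ∈ [4π/3, 2π] -/
lemma S2a2 (ha : 200 ≤ a) :
    ∫ θ in (4*π/3)..(2*π), (θ-2*π/3)^2 * (Real.exp (a * p θ) * Jf a θ) ≤ 77 := by
  have ha0 : (0:ℝ) < a := by linarith
  have hpi := Real.pi_gt_d6
  have hpi' := Real.pi_lt_d6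
  have hpt : ∀ θ ∈ Icc (4*π/3) (2*π), (θ-2*π/3)^2 * (Real.exp (a * p θ) * Jf a θ)
      ≤ (4*π/3)^2 * (2*π/3) := by
    intro θ hθ
    have hθ2π : θ ≤ 2*π := hθ.2
    have h1 : Real.exp (a * p θ) * Jf a θ = ∫ r in θ..(2*π), Real.exp (a * p θ) * f a r := by
      unfold Jf; rw [intervalIntegral.integral_const_mul]
    have h2 : Real.exp (a * p θ) * Jf a θ ≤ 2*π/3 := by
      rw [h1]
      have hmono : ∀ r ∈ Icc θ (2*π), Real.exp (a * p θ) * f a r ≤ 1 := by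
        intro r hr
        have hpr : p θ ≤ p r := p_mono2 ⟨hθ.1, hθ2π⟩ ⟨le_trans hθ.1 hr.1, hr.2⟩ hr.1
        unfold f
        rw [← Real.exp_add, show (1:ℝ) = Real.exp 0 by simp]
        apply Real.exp_le_exp.2
        nlinarith
      calc ∫ r in θ..(2*π), Real.exp (a * p θ) * f a r
          ≤ ∫ r in θ..(2*π), (1:ℝ) :=
            intervalIntegral.integral_mono_on hθ2π
              ((continuous_const.mul f_cont).intervalIntegrable _ _)
              intervalIntegrable_const hmono
        _ = 2*π - θ := by rw [intervalIntegral.integral_const, smul_eq_mul, mul_one]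
        _ ≤ 2*π/3 := by linarith [hθ.1]
    have h3 : (θ-2*π/3)^2 ≤ (4*π/3)^2 := by nlinarith [hθ.1, hθ.2]
    have h4 : (0:ℝ) ≤ Real.exp (a * p θ) * Jf a θ := by
      have := Jf_nonneg (a := a) hθ2π
      positivity
    nlinarith [sq_nonneg (θ - 2*π/3)]
  have hcL : Continuous fun θ => (θ-2*π/3)^2 * (Real.exp (a * p θ) * Jf a θ) := by
    apply Continuous.mul (by continuity)
    exact (Real.continuous_exp.comp (continuous_const.mul p_cont)).mul Jf_cont
  have hb : (4*π/3 : ℝ) ≤ 2*π := by linarith [Real.pi_pos]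
  calc ∫ θ in (4*π/3)..(2*π), (θ-2*π/3)^2 * (Real.exp (a * p θ) * Jf a θ)
      ≤ ∫ θ in (4*π/3)..(2*π), (4*π/3)^2 * (2*π/3) :=
        intervalIntegral.integral_mono_on hb (hcL.intervalIntegrable _ _)
          intervalIntegrable_const hpt
    _ = (2*π - 4*π/3) * ((4*π/3)^2 * (2*π/3)) := by
        rw [intervalIntegral.integral_const, smul_eq_mul]
    _ ≤ 77 := by
        have hπ2 : π^2 ≤ 9.8696085 := by nlinarith
        have hπ4 : π^4 ≤ 97.40918 := by nlinarith
        nlinarith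

/-- wrap-around piece -/
lemma S2b (ha : 200 ≤ a) :
    ∫ θ in (0:ℝ)..(2*π), (θ-2*π/3)^2 *
      (Real.exp (-(2*π)*a) * Real.exp (a * p θ) * If a θ) ≤ 693 := by
  have ha0 : (0:ℝ) < a := by linarith
  have hpi := Real.pi_gt_d6
  have hpi' := Real.pi_lt_d6
  have hpt : ∀ θ ∈ Icc (0:ℝ) (2*π), (θ-2*π/3)^2 *
      (Real.exp (-(2*π)*a) * Real.exp (a * p θ) * If a θ) ≤ (4*π/3)^2 * (2*π) := by
    intro θ hθ
    have h1 : Real.exp (-(2*π)*a) * Real.exp (a * p θ) ≤ 1 := by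
      rw [← Real.exp_add, show (1:ℝ) = Real.exp 0 by simp]
      apply Real.exp_le_exp.2
      have := p_le_two_pi hθ.1 hθ.2
      nlinarith
    have h2 : If a θ ≤ 2*π := by
      have hf1 : ∀ r ∈ Icc (0:ℝ) θ, f a r ≤ 1 := by
        intro r hr
        unfold f
        rw [show (1:ℝ) = Real.exp 0 by simp]
        apply Real.exp_le_exp.2
        have := p_nonneg hr.1 (le_trans hr.2 hθ.2)
        nlinarith
      calc If a θ ≤ ∫ r in (0:ℝ)..θ, (1:ℝ) :=
            intervalIntegral.integral_mono_on hθ.1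
              (f_cont.intervalIntegrable _ _) intervalIntegrable_const hf1
        _ = θ := by rw [intervalIntegral.integral_const, smul_eq_mul]; ring
        _ ≤ 2*π := hθ.2
    have h3 : (θ-2*π/3)^2 ≤ (4*π/3)^2 := by nlinarith [hθ.1, hθ.2]
    have h4 : (0:ℝ) ≤ If a θ := If_nonneg hθ.1
    have h5 : (0:ℝ) < Real.exp (-(2*π)*a) * Real.exp (a * p θ) := by positivity
    nlinarith [sq_nonneg (θ-2*π/3), mul_le_mul h1 h2 h4 zero_le_one]
  have hcL : Continuous fun θ => (θ-2*π/3)^2 *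
      (Real.exp (-(2*π)*a) * Real.exp (a * p θ) * If a θ) := by
    apply Continuous.mul (by continuity)
    exact ((continuous_const.mul
      (Real.continuous_exp.comp (continuous_const.mul p_cont))).mul If_cont)
  have hb : (0:ℝ) ≤ 2*π := by positivity
  calc ∫ θ in (0:ℝ)..(2*π), (θ-2*π/3)^2 *
        (Real.exp (-(2*π)*a) * Real.exp (a * p θ) * If a θ)
      ≤ ∫ θ in (0:ℝ)..(2*π), (4*π/3)^2 * (2*π) :=
        intervalIntegral.integral_mono_on hb (hcL.intervalIntegrable _ _)
          intervalIntegrable_const hpt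
    _ = (2*π - 0) * ((4*π/3)^2 * (2*π)) := by
        rw [intervalIntegral.integral_const, smul_eq_mul]
    _ ≤ 693 := by
        have hπ2 : π^2 ≤ 9.8696085 := by nlinarith
        have hπ4 : π^4 ≤ 97.40918 := by nlinarith
        nlinarith

lemma cont_sqW : Continuous fun θ => (θ-2*π/3)^2 * W a θ :=
  Continuous.mul (by continuity) W_cont

lemma cont_piece1 : Continuous fun θ => (θ-2*π/3)^2 * (Real.exp (a * p θ) * Jf a θ) := by
  apply Continuous.mul (by continuity)
  exact (Real.continuous_exp.comp (continuous_const.mul p_cont)).mul Jf_cont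

lemma cont_piece2 : Continuous fun θ => (θ-2*π/3)^2 *
    (Real.exp (-(2*π)*a) * Real.exp (a * p θ) * If a θ) := by
  apply Continuous.mul (by continuity)
  exact ((continuous_const.mul
    (Real.continuous_exp.comp (continuous_const.mul p_cont))).mul If_cont)

lemma S2_bound (ha : 200 ≤ a) :
    ∫ θ in (0:ℝ)..(2*π), (θ-2*π/3)^2 * W a θ ≤ 293 * Real.exp (a*Hm) / a^2 := by
  have ha0 : (0:ℝ) < a := by linarith
  have hpi := Real.pi_gt_d6
  have hsplit : ∫ θ in (0:ℝ)..(2*π), (θ-2*π/3)^2 * W a θ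
      = (∫ θ in (0:ℝ)..(2*π), (θ-2*π/3)^2 * (Real.exp (a*p θ) * Jf a θ))
        + ∫ θ in (0:ℝ)..(2*π), (θ-2*π/3)^2 *
            (Real.exp (-(2*π)*a) * Real.exp (a*p θ) * If a θ) := by
    rw [← intervalIntegral.integral_add (cont_piece1.intervalIntegrable _ _)
      (cont_piece2.intervalIntegrable _ _)]
    congr 1; funext θ; unfold W; ring
  have hJsplit : ∫ θ in (0:ℝ)..(2*π), (θ-2*π/3)^2 * (Real.exp (a*p θ) * Jf a θ)
      = (∫ θ in (0:ℝ)..(4*π/3), (θ-2*π/3)^2 * (Real.exp (a*p θ) * Jf a θ))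
        + ∫ θ in (4*π/3)..(2*π), (θ-2*π/3)^2 * (Real.exp (a*p θ) * Jf a θ) :=
    (intervalIntegral.integral_add_adjacent_intervals
      (cont_piece1.intervalIntegrable _ _) (cont_piece1.intervalIntegrable _ _)).symm
  have h1 := S2a1 ha
  have h2 := S2a2 ha
  have h3 := S2b ha
  -- absorb the constant 770 into 5 e^{aHm}/a²
  have habs : (770:ℝ) ≤ 5 * Real.exp (a*Hm) / a^2 := by
    have hHm : a * 1 ≤ a * Hm := mul_le_mul_of_nonneg_left Hm_ge_one ha0.le
    have hmono : Real.exp a ≤ Real.exp (a*Hm) := by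
      apply Real.exp_le_exp.2; linarith
    have hq := exp_a_ge ha
    rw [le_div_iff₀ (by positivity)]
    have ha2 : (40000:ℝ) ≤ a^2 := by nlinarith
    have ha4 : a^2 * 40000 ≤ a^2 * a^2 := mul_le_mul_of_nonneg_left ha2 (sq_nonneg a)
    nlinarith
  rw [hsplit, hJsplit]
  have : 288 * Real.exp (a*Hm) / a^2 + 5 * Real.exp (a*Hm) / a^2
      = 293 * Real.exp (a*Hm) / a^2 := by ring
  linarith

set_option maxHeartbeats 1000000 in
lemma S0_lower (ha : 200 ≤ a) :
    Real.exp (a*Hm) / (14*a) ≤ ∫ θ in (0:ℝ)..(2*π), W a θ := by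
  have ha0 : (0:ℝ) < a := by linarith
  have hpi := Real.pi_gt_d6
  have hpi' := Real.pi_lt_d6
  set η := (Real.sqrt a)⁻¹ with hη
  have hs14 : 14 ≤ Real.sqrt a := sqrtA_ge ha
  have hs0 : (0:ℝ) < Real.sqrt a := by linarith
  have hη0 : 0 < η := by positivity
  have hη1 : η ≤ 1 := by
    rw [hη]; exact inv_le_one_of_one_le₀ (by linarith)
  have hη2 : η^2 = a⁻¹ := by rw [hη, inv_pow, sqrtA_sq ha]
  have hηsq : a * η^2 = 1 := by rw [hη2, mul_inv_cancel₀ (ne_of_gt ha0)]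
  -- inner bound on Jf
  have hJ : ∀ θ ∈ Icc (2*π/3 - η) (2*π/3 + η),
      2*η*Real.exp (-(a * (p (4*π/3) + 2*η^2))) ≤ Jf a θ := by
    intro θ hθ
    have hmid : ∫ r in (4*π/3 - η)..(4*π/3 + η), f a r ≤ Jf a θ := by
      unfold Jf
      apply middle_le f_cont (by linarith [hθ.2]) (by linarith) (by linarith)
      intro x _; exact f_pos.le
    have hlow : ∫ r in (4*π/3 - η)..(4*π/3 + η),
        Real.exp (-(a * (p (4*π/3) + 2*η^2))) ≤ ∫ r in (4*π/3 - η)..(4*π/3 + η), f a r := by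
      apply intervalIntegral.integral_mono_on (by linarith)
        intervalIntegrable_const (f_cont.intervalIntegrable _ _)
      intro r hr
      unfold f
      apply Real.exp_le_exp.2
      have habs : |r - 4*π/3| ≤ 1 := by
        rw [abs_le]; constructor <;> [linarith [hr.1]; linarith [hr.2]]
      have ht := taylor2 habs
      rw [show 4*π/3 + (r - 4*π/3) = r by ring] at ht
      have hsq : (r - 4*π/3)^2 ≤ η^2 := by
        have : |r - 4*π/3| ≤ η := by
          rw [abs_le]; constructor <;> [linarith [hr.1]; linarith [hr.2]]
        nlinarith [abs_nonneg (r - 4*π/3), sq_abs (r - 4*π/3)]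
      have : p r ≤ p (4*π/3) + 2*η^2 := by nlinarith
      nlinarith [mul_le_mul_of_nonneg_left this ha0.le]
    have hconst : ∫ r in (4*π/3 - η)..(4*π/3 + η),
        Real.exp (-(a * (p (4*π/3) + 2*η^2)))
        = 2*η*Real.exp (-(a * (p (4*π/3) + 2*η^2))) := by
      rw [intervalIntegral.integral_const, smul_eq_mul]; ring_nf
    linarith [hconst.symm.le]
  -- pointwise lower bound on W
  have hW : ∀ θ ∈ Icc (2*π/3 - η) (2*π/3 + η),
      2*η*Real.exp (a*Hm)*Real.exp (-(4:ℝ)) ≤ W a θ := by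
    intro θ hθ
    have hJθ := hJ θ hθ
    have habs : |θ - 2*π/3| ≤ 1 := by
      rw [abs_le]; constructor <;> [linarith [hθ.1]; linarith [hθ.2]]
    have ht := taylor1 habs
    rw [show 2*π/3 + (θ - 2*π/3) = θ by ring] at ht
    have hexp : Real.exp (a * (p (2*π/3) - 2*η^2)) ≤ Real.exp (a * p θ) := by
      apply Real.exp_le_exp.2
      have hsq : (θ - 2*π/3)^2 ≤ η^2 := by
        have : |θ - 2*π/3| ≤ η := by
          rw [abs_le]; constructor <;> [linarith [hθ.1]; linarith [hθ.2]]
        nlinarith [abs_nonneg (θ - 2*π/3), sq_abs (θ - 2*π/3)]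
      have : p (2*π/3) - 2*η^2 ≤ p θ := by nlinarith
      nlinarith [mul_le_mul_of_nonneg_left this ha0.le]
    have hprod : Real.exp (a * (p (2*π/3) - 2*η^2)) *
        (2*η*Real.exp (-(a * (p (4*π/3) + 2*η^2)))) ≤ Real.exp (a * p θ) * Jf a θ := by
      apply mul_le_mul hexp hJθ (by positivity) (Real.exp_pos _).le
    have hcollapse : Real.exp (a * (p (2*π/3) - 2*η^2)) *
        (2*η*Real.exp (-(a * (p (4*π/3) + 2*η^2))))
        = 2*η*Real.exp (a*Hm)*Real.exp (-(4:ℝ)) := by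
      have hadd : a * (p (2*π/3) - 2*η^2) + (-(a * (p (4*π/3) + 2*η^2))) = a*Hm + (-(4:ℝ)) := by
        unfold Hm; linear_combination (-4 : ℝ) * hηsq
      calc Real.exp (a * (p (2*π/3) - 2*η^2)) * (2*η*Real.exp (-(a * (p (4*π/3) + 2*η^2))))
          = 2*η*(Real.exp (a * (p (2*π/3) - 2*η^2)) * Real.exp (-(a * (p (4*π/3) + 2*η^2)))) := by
            ring
        _ = 2*η*Real.exp (a * (p (2*π/3) - 2*η^2) + (-(a * (p (4*π/3) + 2*η^2)))) := by
            rw [Real.exp_add]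
        _ = 2*η*Real.exp (a*Hm + (-(4:ℝ))) := by rw [hadd]
        _ = 2*η*Real.exp (a*Hm)*Real.exp (-(4:ℝ)) := by rw [Real.exp_add]; ring
    have hWge : Real.exp (a * p θ) * Jf a θ ≤ W a θ := by
      unfold W
      have h0θ : (0:ℝ) ≤ θ := by linarith [hθ.1]
      have hI := If_nonneg (a := a) h0θ
      have : 0 ≤ Real.exp (-(2*π)*a) * Real.exp (a * p θ) * If a θ :=
        mul_nonneg (mul_nonneg (Real.exp_pos _).le (Real.exp_pos _).le) hI
      linarith
    rw [hcollapse] at hprod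
    linarith
  -- integrate over the window
  have hwin : (∫ θ in (2*π/3 - η)..(2*π/3 + η), W a θ) ≤ ∫ θ in (0:ℝ)..(2*π), W a θ := by
    apply middle_le W_cont (by linarith) (by linarith) (by linarith)
    intro x hx; exact W_nonneg hx.1 hx.2
  have hwin2 : 2*η*(2*η*Real.exp (a*Hm)*Real.exp (-(4:ℝ)))
      ≤ ∫ θ in (2*π/3 - η)..(2*π/3 + η), W a θ := by
    have this : ∫ θ in (2*π/3 - η)..(2*π/3 + η), (2*η*Real.exp (a*Hm)*Real.exp (-(4:ℝ)))
        ≤ ∫ θ in (2*π/3 - η)..(2*π/3 + η), W a θ :=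
      intervalIntegral.integral_mono_on (by linarith) intervalIntegrable_const
        (W_cont.intervalIntegrable _ _) hW
    rw [intervalIntegral.integral_const, smul_eq_mul] at this
    calc 2*η*(2*η*Real.exp (a*Hm)*Real.exp (-(4:ℝ)))
        = (2*π/3 + η - (2*π/3 - η)) * (2*η*Real.exp (a*Hm)*Real.exp (-(4:ℝ))) := by ring
      _ ≤ _ := this
  have hkey : Real.exp (a*Hm) / (14*a) ≤ 2*η*(2*η*Real.exp (a*Hm)*Real.exp (-(4:ℝ))) := by
    have hexp4 : (1:ℝ)/56 ≤ Real.exp (-(4:ℝ)) := by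
      rw [Real.exp_neg]
      have h1 : Real.exp 4 ≤ 56 := by linarith [exp_four_le]
      have := one_div_le_one_div_of_le (Real.exp_pos 4) h1
      rw [one_div (Real.exp 4)] at this
      linarith
    have hE : (0:ℝ) < Real.exp (a*Hm) := Real.exp_pos _
    have heq : 2*η*(2*η*Real.exp (a*Hm)*Real.exp (-(4:ℝ)))
        = 4 * a⁻¹ * Real.exp (a*Hm) * Real.exp (-(4:ℝ)) := by
      rw [← hη2]; ring
    rw [heq]
    have h2 : Real.exp (a*Hm) / (14*a) = Real.exp (a*Hm) * a⁻¹ * (4 * (1/56)) := by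
      rw [div_eq_mul_inv, mul_inv]; ring
    rw [h2]
    have h3 : Real.exp (a*Hm) * a⁻¹ * (4 * (1/56))
        ≤ Real.exp (a*Hm) * a⁻¹ * (4 * Real.exp (-(4:ℝ))) := by
      apply mul_le_mul_of_nonneg_left (by linarith) (by positivity)
    calc Real.exp (a*Hm) * a⁻¹ * (4 * (1/56)) ≤ _ := h3
      _ = 4 * a⁻¹ * Real.exp (a*Hm) * Real.exp (-(4:ℝ)) := by ring
  linarith

lemma main_ratio (ha : 200 ≤ a) :
    ∫ θ in (0:ℝ)..(2*π), (θ-2*π/3)^2 * W a θ ≤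
      (4200/a) * ∫ θ in (0:ℝ)..(2*π), W a θ := by
  have ha0 : (0:ℝ) < a := by linarith
  have h1 := S2_bound ha
  have h2 := S0_lower ha
  have hE := Real.exp_pos (a*Hm)
  have key : 293 * Real.exp (a*Hm) / a^2 ≤ (4200/a) * (Real.exp (a*Hm) / (14*a)) := by
    rw [div_mul_div_comm, div_le_div_iff₀ (by positivity) (by positivity)]
    nlinarith [mul_pos (mul_pos hE ha0) ha0, mul_pos ha0 ha0]
  have h3 : (4200/a) * (Real.exp (a*Hm)/(14*a)) ≤
      (4200/a) * ∫ θ in (0:ℝ)..(2*π), W a θ :=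
    mul_le_mul_of_nonneg_left h2 (by positivity)
  linarith

end CoreEstimates


end SDV

open SDV

/-- Lemma 4.7: the variance of the stationary phase distribution is `O(γ)`. -/
theorem stationary_density_variance :
    ∃ C > (0:ℝ), ∃ γ₀ > (0:ℝ), ∀ γ : ℝ, 0 < γ → γ < γ₀ →
      (∫ θ in (0:ℝ)..(2 * π), θ ^ 2 * ustar γ θ)
        - (∫ θ in (0:ℝ)..(2 * π), θ * ustar γ θ) ^ 2 ≤ C * γ := by
  refine ⟨2100, by norm_num, 1/100, by norm_num, fun γ hγ0 hγ1 => ?_⟩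
  set a : ℝ := 2/γ with ha_def
  have ha : 200 ≤ a := by
    rw [ha_def, le_div_iff₀ hγ0]; linarith
  have ha0 : (0:ℝ) < a := by linarith
  -- identification of Znorm with If a (2π)
  have hZI : Znorm γ = If a (2*π) := rfl
  -- Znorm is positive
  have hZpos : 0 < Znorm γ := by
    rw [hZI]
    have h1 : ∀ r ∈ Icc (0:ℝ) (2*π), Real.exp (-(a*(2*π))) ≤ f a r := by
      intro r hr
      unfold SDV.f
      apply Real.exp_le_exp.2
      have := p_le_two_pi hr.1 hr.2
      nlinarith
    have h2 : (∫ r in (0:ℝ)..(2*π), Real.exp (-(a*(2*π)))) ≤ If a (2*π) :=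
      intervalIntegral.integral_mono_on (by linarith [Real.pi_pos] : (0:ℝ) ≤ 2*π)
        intervalIntegrable_const (f_cont.intervalIntegrable _ _) h1
    rw [intervalIntegral.integral_const, smul_eq_mul] at h2
    have : (0:ℝ) < (2*π - 0) * Real.exp (-(a*(2*π))) :=
      mul_pos (by linarith [Real.pi_pos]) (Real.exp_pos _)
    linarith
  have hZne : Znorm γ ≠ 0 := ne_of_gt hZpos
  -- wfun in terms of W
  have hwW : ∀ θ : ℝ, wfun γ θ = W a θ / Znorm γ := by
    intro θ
    have key : Znorm γ * wfun γ θ = W a θ := by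
      unfold wfun C0 SDV.W
      have hIf : (∫ r in (0:ℝ)..θ, Real.exp (-(2 / γ) * (r + 2 * Real.sin r))) = If a θ := rfl
      have hexp : Real.exp ((2 / γ) * (θ + 2 * Real.sin θ)) = Real.exp (a * p θ) := rfl
      have hexp2 : Real.exp (-(2 * π) * (2 / γ)) = Real.exp (-(2*π)*a) := rfl
      rw [hIf, hexp, hexp2]
      have hJ : Jf a θ = If a (2*π) - If a θ := by linarith [IJ_split (a := a) (θ := θ)]
      rw [hJ, ← hZI]
      field_simp
      ring
    rw [← key, mul_comm, mul_div_assoc, div_self hZne, mul_one]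
  -- continuity of wfun
  have hw_cont : Continuous (wfun γ) := by
    have : wfun γ = fun θ => W a θ / Znorm γ := funext hwW
    rw [this]
    exact W_cont.div_const _
  -- denominator
  set Dw : ℝ := ∫ s in (0:ℝ)..(2*π), wfun γ s with hDw_def
  set S0 : ℝ := ∫ θ in (0:ℝ)..(2*π), W a θ with hS0_def
  set S2 : ℝ := ∫ θ in (0:ℝ)..(2*π), (θ-2*π/3)^2 * W a θ with hS2_def
  have hS0pos : 0 < S0 := by
    have := S0_lower ha
    have h2 : (0:ℝ) < Real.exp (a*SDV.Hm) / (14*a) := by positivity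
    linarith
  have hDwS0 : Dw = S0 / Znorm γ := by
    rw [hDw_def, hS0_def]
    rw [show (fun s => wfun γ s) = fun s => W a s / Znorm γ from funext hwW]
    exact intervalIntegral.integral_div _ _
  have hDwpos : 0 < Dw := by rw [hDwS0]; positivity
  have hDwne : Dw ≠ 0 := ne_of_gt hDwpos
  -- moments
  set P2 : ℝ := ∫ θ in (0:ℝ)..(2*π), θ^2 * wfun γ θ with hP2
  set P1 : ℝ := ∫ θ in (0:ℝ)..(2*π), θ * wfun γ θ with hP1
  set Q : ℝ := ∫ θ in (0:ℝ)..(2*π), (θ-2*π/3)^2 * wfun γ θ with hQ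
  -- Q in terms of S2
  have hQS2 : Q = S2 / Znorm γ := by
    rw [hQ, hS2_def]
    rw [show (fun θ => (θ-2*π/3)^2 * wfun γ θ)
        = fun θ => ((θ-2*π/3)^2 * W a θ) / Znorm γ from
      funext (fun θ => by rw [hwW θ]; ring)]
    exact intervalIntegral.integral_div _ _
  -- ratio bound
  have hQbound : Q ≤ 2100 * γ * Dw := by
    have h1 := main_ratio ha
    have h2 : (4200/a : ℝ) = 2100 * γ := by
      rw [ha_def]; field_simp; ring
    rw [← hS2_def, ← hS0_def, h2] at h1
    rw [hQS2, hDwS0]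
    rw [div_le_iff₀ hZpos]
    calc S2 ≤ 2100*γ*S0 := h1
      _ = 2100*γ*(S0/Znorm γ) * Znorm γ := by
          rw [mul_assoc (2100*γ) (S0/Znorm γ) (Znorm γ), div_mul_cancel₀ S0 hZne]
  -- expand Q
  have hQexp : Q = P2 - (4*π/3)*P1 + (2*π/3)^2 * Dw := by
    rw [hQ, hP2, hP1, hDw_def]
    have e1 : (fun θ => (θ-2*π/3)^2 * wfun γ θ)
        = fun θ => θ^2 * wfun γ θ - (4*π/3)*(θ * wfun γ θ) + (2*π/3)^2 * wfun γ θ := by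
      funext θ; ring
    rw [e1]
    have i1 : IntervalIntegrable (fun θ => θ^2 * wfun γ θ) volume 0 (2*π) :=
      (Continuous.mul (by continuity) hw_cont).intervalIntegrable _ _
    have i2 : IntervalIntegrable (fun θ => (4*π/3)*(θ * wfun γ θ)) volume 0 (2*π) :=
      (Continuous.mul continuous_const
        (Continuous.mul continuous_id hw_cont)).intervalIntegrable _ _
    have i3 : IntervalIntegrable (fun θ => (2*π/3)^2 * wfun γ θ) volume 0 (2*π) :=
      (continuous_const.mul hw_cont).intervalIntegrable _ _
    rw [intervalIntegral.integral_add (i1.sub i2) i3, intervalIntegral.integral_sub i1 i2,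
      intervalIntegral.integral_const_mul, intervalIntegral.integral_const_mul]
    try ring
  -- moments of ustar
  have hM2 : (∫ θ in (0:ℝ)..(2 * π), θ ^ 2 * ustar γ θ) = P2 / Dw := by
    rw [show (fun θ => θ^2 * ustar γ θ) = fun θ => (θ^2 * wfun γ θ) / Dw from
      funext (fun θ => by unfold ustar; rw [← hDw_def]; ring)]
    exact intervalIntegral.integral_div _ _
  have hM1 : (∫ θ in (0:ℝ)..(2 * π), θ * ustar γ θ) = P1 / Dw := by
    rw [show (fun θ => θ * ustar γ θ) = fun θ => (θ * wfun γ θ) / Dw from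
      funext (fun θ => by unfold ustar; rw [← hDw_def]; ring)]
    exact intervalIntegral.integral_div _ _
  rw [hM2, hM1]
  -- final algebra
  have key : P2 * Dw - P1^2 ≤ 2100*γ*Dw^2 := by
    have h1 : P2 = Q + (4*π/3)*P1 - (2*π/3)^2 * Dw := by linarith [hQexp]
    have h2 : Q * Dw ≤ 2100*γ*Dw * Dw := mul_le_mul_of_nonneg_right hQbound hDwpos.le
    nlinarith [sq_nonneg (P1 - (2*π/3)*Dw)]
  have heq : P2/Dw - (P1/Dw)^2 = (P2*Dw - P1^2)/Dw^2 := by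
    field_simp
  rw [heq, div_le_iff₀ (by positivity)]
  linarith
end

section
/- For every ξ ∈ ℝ and every pair of points y₀, y₁ ∈ (0,∞)² × ℝ², there exists a C¹ path y : [0,1] → (0,∞)² × ℝ² with y(0) = y₀, y(1) = y₁ and ∫₀¹ (−2)·h(y(t)) dt = ξ. Consequently, along such a controlled path the middle-mode energy I₂, which evolves by İ₂ = −2 h(y(t)) I₂, can be steered from any positive initial value I₂⁰ to any positive target value I₂¹ = I₂⁰ e^{ξ} in unit time. -/
open Real

/-- `h(I₁,I₃,θ₁,θ₃) = I₁ sin θ₁ + I₃ sin θ₃`, on `ℝ⁴` with coordinates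
`(I₁, I₃, θ₁, θ₃)`. -/
noncomputable def hObs (x : ℝ × ℝ × ℝ × ℝ) : ℝ :=
  x.1 * Real.sin x.2.2.1 + x.2.1 * Real.sin x.2.2.2

/- Auxiliary material -/

noncomputable def tr : ℝ → ℝ := Real.smoothTransition

lemma tr_contDiff : ContDiff ℝ 1 tr := Real.smoothTransition.contDiff

lemma tr_nonneg (x : ℝ) : 0 ≤ tr x := Real.smoothTransition.nonneg x

lemma tr_le_one (x : ℝ) : tr x ≤ 1 := Real.smoothTransition.le_one x

lemma tr_zero_of_nonpos {x : ℝ} (h : x ≤ 0) : tr x = 0 :=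
  Real.smoothTransition.zero_of_nonpos h

lemma tr_one_of_one_le {x : ℝ} (h : 1 ≤ x) : tr x = 1 :=
  Real.smoothTransition.one_of_one_le h

/-- A smooth bump supported in `(1/3, 2/3)`. -/
noncomputable def bump (t : ℝ) : ℝ := tr (6*t - 2) * tr (4 - 6*t)

lemma bump_contDiff : ContDiff ℝ 1 bump := by
  apply ContDiff.mul
  · exact tr_contDiff.comp ((contDiff_const.mul contDiff_id).sub contDiff_const)
  · exact tr_contDiff.comp (contDiff_const.sub (contDiff_const.mul contDiff_id))

lemma bump_continuous : Continuous bump := bump_contDiff.continuous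

lemma bump_nonneg (t : ℝ) : 0 ≤ bump t := mul_nonneg (tr_nonneg _) (tr_nonneg _)

lemma bump_eq_zero_left {t : ℝ} (h : t ≤ 1/3) : bump t = 0 := by
  unfold bump; rw [tr_zero_of_nonpos (by linarith), zero_mul]

lemma bump_eq_zero_right {t : ℝ} (h : 2/3 ≤ t) : bump t = 0 := by
  unfold bump; rw [tr_zero_of_nonpos (by linarith) (x := 4 - 6*t), mul_zero]

lemma bump_pos {t : ℝ} (h1 : 1/3 < t) (h2 : t < 2/3) : 0 < bump t :=
  mul_pos (Real.smoothTransition.pos_of_pos (by linarith))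
    (Real.smoothTransition.pos_of_pos (by linarith))

lemma bump_mem {t : ℝ} (h : bump t ≠ 0) : 1/3 < t ∧ t < 2/3 := by
  constructor
  · by_contra hc; exact h (bump_eq_zero_left (by linarith))
  · by_contra hc; exact h (bump_eq_zero_right (by linarith))

/-- Interpolation of the action variables. -/
noncomputable def seg (a b t : ℝ) : ℝ := a + tr t * (b - a)

lemma seg_contDiff (a b : ℝ) : ContDiff ℝ 1 (seg a b) :=
  contDiff_const.add (tr_contDiff.mul contDiff_const)

lemma seg_pos {a b : ℝ} (ha : 0 < a) (hb : 0 < b) (t : ℝ) : 0 < seg a b t := by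
  have h1 := tr_nonneg t
  have h2 := tr_le_one t
  unfold seg
  rcases lt_or_ge (tr t) 1 with h | h
  · nlinarith
  · have he : tr t = 1 := le_antisymm h2 h
    rw [he]; linarith

lemma seg_zero (a b : ℝ) : seg a b 0 = a := by
  unfold seg; rw [tr_zero_of_nonpos le_rfl]; ring

lemma seg_one (a b : ℝ) : seg a b 1 = b := by
  unfold seg; rw [tr_one_of_one_le le_rfl]; ring

/-- Angle path: from `a` to `m` on `[0,1/3]`, constant `m` on `[1/3,2/3]`,
from `m` to `b` on `[2/3,1]`. -/
noncomputable def ang (a m b t : ℝ) : ℝ :=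
  a + tr (3*t) * (m - a) + tr (3*t - 2) * (b - m)

lemma ang_contDiff (a m b : ℝ) : ContDiff ℝ 1 (ang a m b) := by
  apply ContDiff.add
  · exact contDiff_const.add
      ((tr_contDiff.comp (contDiff_const.mul contDiff_id)).mul contDiff_const)
  · exact (tr_contDiff.comp ((contDiff_const.mul contDiff_id).sub contDiff_const)).mul
      contDiff_const

lemma ang_zero (a m b : ℝ) : ang a m b 0 = a := by
  unfold ang
  rw [tr_zero_of_nonpos (by norm_num : (3:ℝ)*0 ≤ 0),
    tr_zero_of_nonpos (by norm_num : (3:ℝ)*0 - 2 ≤ 0)]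
  ring

lemma ang_one (a m b : ℝ) : ang a m b 1 = b := by
  unfold ang
  rw [tr_one_of_one_le (by norm_num : (1:ℝ) ≤ 3*1),
    tr_one_of_one_le (by norm_num : (1:ℝ) ≤ 3*1 - 2)]
  ring

lemma ang_mid {a m b t : ℝ} (h1 : 1/3 < t) (h2 : t < 2/3) : ang a m b t = m := by
  unfold ang
  rw [tr_one_of_one_le (by linarith), tr_zero_of_nonpos (by linarith)]
  ring

/-- Key pointwise identity: on the support of the bump the angle is pinned. -/
lemma bump_mul_sin_ang (a m b t : ℝ) :
    bump t * Real.sin (ang a m b t) = Real.sin m * bump t := by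
  rcases eq_or_ne (bump t) 0 with h | h
  · simp [h]
  · obtain ⟨h1, h2⟩ := bump_mem h
    rw [ang_mid h1 h2]; ring

lemma max_sub_max (x : ℝ) : max 0 x - max 0 (-x) = x := by
  rcases le_total 0 x with h | h
  · rw [max_eq_right h, max_eq_left (by linarith)]; ring
  · rw [max_eq_left h, max_eq_right (by linarith)]; ring

/-- controllability step in Lemma 6.1: for any `ξ ∈ ℝ` and any two
points of `(0,∞)² × ℝ²` there is a C¹ path `y` joining them in unit time with
`∫₀¹ (−2)h(y(t)) dt = ξ`; consequently the noiseless mode `I₂`, evolving by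
`İ₂ = −2h(y(t))I₂`, is steered from any `I₂⁰ > 0` to `I₂⁰ e^ξ`. -/
theorem controllability_I2 (ξ : ℝ) (y₀ y₁ : ℝ × ℝ × ℝ × ℝ)
    (h₀ : 0 < y₀.1 ∧ 0 < y₀.2.1) (h₁ : 0 < y₁.1 ∧ 0 < y₁.2.1) :
    ∃ y : ℝ → ℝ × ℝ × ℝ × ℝ,
      ContDiffOn ℝ 1 y (Set.Icc 0 1) ∧
      y 0 = y₀ ∧ y 1 = y₁ ∧
      (∀ t ∈ Set.Icc (0:ℝ) 1, 0 < (y t).1 ∧ 0 < (y t).2.1) ∧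
      (∫ t in (0:ℝ)..1, -2 * hObs (y t)) = ξ ∧
      (∀ I₂0 : ℝ, 0 < I₂0 →
        I₂0 * Real.exp (∫ t in (0:ℝ)..1, -2 * hObs (y t)) = I₂0 * Real.exp ξ) := by
  obtain ⟨a₀, b₀, φ₀, ψ₀⟩ := y₀
  obtain ⟨a₁, b₁, φ₁, ψ₁⟩ := y₁
  obtain ⟨ha₀, hb₀⟩ := h₀
  obtain ⟨ha₁, hb₁⟩ := h₁
  simp only at ha₀ hb₀ ha₁ hb₁ ⊢
  -- angle paths
  set Θ₁ : ℝ → ℝ := ang φ₀ (π/2) φ₁ with hΘ₁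
  set Θ₃ : ℝ → ℝ := ang ψ₀ (-(π/2)) ψ₁ with hΘ₃
  -- base integrand
  set g : ℝ → ℝ := fun t => -2 * (seg a₀ a₁ t * Real.sin (Θ₁ t)
      + seg b₀ b₁ t * Real.sin (Θ₃ t)) with hg
  have hgcont : Continuous g := by
    apply Continuous.mul continuous_const
    apply Continuous.add
    · exact ((seg_contDiff a₀ a₁).continuous).mul
        (Real.continuous_sin.comp (ang_contDiff _ _ _).continuous)
    · exact ((seg_contDiff b₀ b₁).continuous).mul
        (Real.continuous_sin.comp (ang_contDiff _ _ _).continuous)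
  set J₀ : ℝ := ∫ t in (0:ℝ)..1, g t with hJ₀
  set B : ℝ := ∫ t in (0:ℝ)..1, bump t with hB
  -- B > 0
  have hBpos : 0 < B := by
    have hint : ∀ u v : ℝ, IntervalIntegrable bump MeasureTheory.volume u v :=
      fun u v => bump_continuous.intervalIntegrable u v
    have hsplit : (∫ t in (0:ℝ)..(1/3:ℝ), bump t) + (∫ t in (1/3:ℝ)..(2/3:ℝ), bump t)
        + (∫ t in (2/3:ℝ)..(1:ℝ), bump t) = B := by
      rw [hB, ← intervalIntegral.integral_add_adjacent_intervals (hint 0 (1/3)) (hint (1/3) 1),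
        ← intervalIntegral.integral_add_adjacent_intervals (hint (1/3) (2/3)) (hint (2/3) 1)]
      ring
    have h1 : (∫ t in (0:ℝ)..(1/3:ℝ), bump t) = 0 := by
      rw [intervalIntegral.integral_congr (g := fun _ => (0:ℝ))
        (fun t ht => by
          rw [Set.uIcc_of_le (by norm_num)] at ht
          exact bump_eq_zero_left ht.2)]
      simp
    have h3 : (∫ t in (2/3:ℝ)..(1:ℝ), bump t) = 0 := by
      rw [intervalIntegral.integral_congr (g := fun _ => (0:ℝ))
        (fun t ht => by
          rw [Set.uIcc_of_le (by norm_num)] at ht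
          exact bump_eq_zero_right ht.1)]
      simp
    have h2 : 0 < ∫ t in (1/3:ℝ)..(2/3:ℝ), bump t := by
      apply intervalIntegral.intervalIntegral_pos_of_pos_on (hint _ _)
      · intro x hx; exact bump_pos hx.1 hx.2
      · norm_num
    linarith [hsplit]
  -- the bump heights
  set c : ℝ := max 0 ((ξ - J₀) / (2*B)) with hc
  set d : ℝ := max 0 (-((ξ - J₀) / (2*B))) with hd
  have hc0 : 0 ≤ c := le_max_left _ _
  have hd0 : 0 ≤ d := le_max_left _ _
  have hcd : c - d = (ξ - J₀) / (2*B) := max_sub_max _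
  -- the integral computation, done first
  have hptwise : ∀ t : ℝ,
      -2 * hObs (seg a₀ a₁ t + d * bump t, seg b₀ b₁ t + c * bump t, Θ₁ t, Θ₃ t)
        = g t + (2*c - 2*d) * bump t := by
    intro t
    have h1 : bump t * Real.sin (Θ₁ t) = Real.sin (π/2) * bump t :=
      bump_mul_sin_ang _ _ _ _
    have h3 : bump t * Real.sin (Θ₃ t) = Real.sin (-(π/2)) * bump t :=
      bump_mul_sin_ang _ _ _ _
    rw [Real.sin_pi_div_two] at h1
    rw [Real.sin_neg, Real.sin_pi_div_two] at h3
    simp only [hObs, hg]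
    nlinarith [h1, h3]
  have hIntegral : (∫ t in (0:ℝ)..1,
      -2 * hObs (seg a₀ a₁ t + d * bump t, seg b₀ b₁ t + c * bump t, Θ₁ t, Θ₃ t)) = ξ := by
    have hcongr : (∫ t in (0:ℝ)..1,
        -2 * hObs (seg a₀ a₁ t + d * bump t, seg b₀ b₁ t + c * bump t, Θ₁ t, Θ₃ t))
        = ∫ t in (0:ℝ)..1, (g t + (2*c - 2*d) * bump t) := by
      apply intervalIntegral.integral_congr
      intro t _
      exact hptwise t
    have h2 : (∫ t in (0:ℝ)..1, (2*c - 2*d) * bump t) = (2*c - 2*d) * B := by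
      rw [intervalIntegral.integral_const_mul, ← hB]
    rw [hcongr, intervalIntegral.integral_add (g := fun t => (2*c - 2*d) * bump t) (hgcont.intervalIntegrable 0 1)
      ((continuous_const.mul bump_continuous).intervalIntegrable 0 1), h2, ← hJ₀]
    have hcd2 : (2*c - 2*d) = (ξ - J₀) / B := by
      rw [show 2*c - 2*d = 2*(c-d) by ring, hcd]
      field_simp
    rw [hcd2, div_mul_cancel₀ _ hBpos.ne']
    ring
  -- the path
  refine ⟨fun t => (seg a₀ a₁ t + d * bump t, seg b₀ b₁ t + c * bump t, Θ₁ t, Θ₃ t),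
    ?_, ?_, ?_, ?_, ?_, ?_⟩
  · apply ContDiff.contDiffOn
    refine ContDiff.prodMk ?_ (ContDiff.prodMk ?_ (ContDiff.prodMk ?_ ?_))
    · exact (seg_contDiff a₀ a₁).add (contDiff_const.mul bump_contDiff)
    · exact (seg_contDiff b₀ b₁).add (contDiff_const.mul bump_contDiff)
    · exact ang_contDiff _ _ _
    · exact ang_contDiff _ _ _
  · have hb0 : bump 0 = 0 := bump_eq_zero_left (by norm_num)
    simp [hΘ₁, hΘ₃, seg_zero, ang_zero, hb0]
  · have hb1 : bump 1 = 0 := bump_eq_zero_right (by norm_num)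
    simp [hΘ₁, hΘ₃, seg_one, ang_one, hb1]
  · intro t _
    constructor
    · have := bump_nonneg t
      have := seg_pos ha₀ ha₁ t
      positivity
    · have := bump_nonneg t
      have := seg_pos hb₀ hb₁ t
      positivity
  · exact hIntegral
  · intro I₂0 _
    rw [hIntegral]
end
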